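/- arXiv:2506.18809 — 6 statements merged into one kernel-verified Lean document; each statement's English description precedes it below -/
import Mathlib

section
/- Let F : ℝ × ℝ^d → ℝ^d satisfy |F(t,a) − F(t,b)| ≤ L₁|a − b| for all a,b ∈ ℝ^d and t ∈ [t₀, t_end]. Let y : [t₀, t_end] → ℝ^d be absolutely continuous with ∂_t y(t) = F(t, y(t)) for a.e. t and y(t₀) = y₀, and let z : [t₀, t_end] → ℝ^d be absolutely continuous with z(t₀) = y₀ and square-integrable residual R(t) := ∂_t z(t) − F(t, z(t)). Then there exists a constant C > 0, depending only on L₁ and t_end − t₀, such that ‖y − z‖²_{H¹([t₀,t_end])} ≤ C ∫_{t₀}^{t_end} |R(t)|² dt. -/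
/-!
The error `e = y - z` is the primitive of `g = y' - z'`, and the Lipschitz bound on `F` gives
`‖g‖ ≤ L ‖e‖ + ‖R‖` almost everywhere. Integrating, `‖e t‖ ≤ ∫ ‖R‖ + L ∫_{t₀}^t ‖e‖`, so
Grönwall's inequality bounds `‖e‖` uniformly by `e^{LT} ∫ ‖R‖ ≤ e^{LT} (T ∫ ‖R‖²)^{1/2}`
(Cauchy–Schwarz). This controls `∫ ‖e‖²`, and then `∫ ‖g‖² ≤ 2 L² ∫ ‖e‖² + 2 ∫ ‖R‖²`.
-/

open MeasureTheory Set

open Filter Topology Real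

theorem sq_intervalIntegral_le_mul_intervalIntegral_sq {f : ℝ → ℝ} {a b : ℝ} (hab : a ≤ b)
    (hf : IntervalIntegrable f volume a b)
    (hf2 : IntervalIntegrable (fun t => f t ^ 2) volume a b) :
    (∫ t in a..b, f t) ^ 2 ≤ (b - a) * ∫ t in a..b, f t ^ 2 := by
  set I := ∫ t in a..b, f t
  have hvar : ∫ t in a..b, ((b - a) * f t - I) ^ 2 =
      (b - a) * ((b - a) * (∫ t in a..b, f t ^ 2) - I ^ 2) := by
    have hexp : (fun t => ((b - a) * f t - I) ^ 2) =
        fun t => (b - a) ^ 2 * f t ^ 2 - 2 * (b - a) * I * f t + I ^ 2 := by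
      ext t; ring
    rw [hexp,
      intervalIntegral.integral_add ((hf2.const_mul _).sub (hf.const_mul _))
        intervalIntegrable_const,
      intervalIntegral.integral_sub (hf2.const_mul _) (hf.const_mul _),
      intervalIntegral.integral_const_mul, intervalIntegral.integral_const_mul,
      intervalIntegral.integral_const, smul_eq_mul]
    ring
  have hnonneg : 0 ≤ (b - a) * ((b - a) * (∫ t in a..b, f t ^ 2) - I ^ 2) :=
    hvar ▸ intervalIntegral.integral_nonneg hab fun _ _ => sq_nonneg _
  rcases hab.eq_or_lt with rfl | hlt
  · simp [I]
  · have := (mul_nonneg_iff_of_pos_left (sub_pos.2 hlt)).1 hnonneg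
    linarith

theorem le_mul_exp_of_le_add_mul_intervalIntegral {u : ℝ → ℝ} {a b ε L : ℝ} (hL : 0 ≤ L)
    (hu : ContinuousOn u (Icc a b)) (h : ∀ t ∈ Icc a b, u t ≤ ε + L * ∫ s in a..t, u s) :
    ∀ t ∈ Icc a b, u t ≤ ε * exp (L * (t - a)) := by
  intro t ht
  have hab : a ≤ b := ht.1.trans ht.2
  set w : ℝ → ℝ := fun x => ε + L * ∫ s in a..x, u s
  have hw : ContinuousOn w (Icc a b) := by
    have := intervalIntegral.continuousOn_primitive_interval'
      (hu.intervalIntegrable_of_Icc (μ := volume) hab) left_mem_uIcc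
    rw [uIcc_of_le hab] at this
    exact continuousOn_const.add (continuousOn_const.mul this)
  have hw' : ∀ x ∈ Ico a b, HasDerivWithinAt w (L * u x) (Ici x) x := by
    intro x hx
    have hmem : Icc a b ∈ 𝓝[>] x := Icc_mem_nhdsGT_of_mem hx
    have hxI : x ∈ Icc a b := Ico_subset_Icc_self hx
    refine (HasDerivWithinAt.const_mul L ?_).const_add ε
    exact intervalIntegral.integral_hasDerivWithinAt_right
      ((hu.intervalIntegrable_of_Icc hab).mono_set (uIcc_subset_uIcc_left (Icc_subset_uIcc hxI)))
      ⟨Icc a b, hmem, hu.aestronglyMeasurable measurableSet_Icc⟩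
      ((hu x hxI).mono_of_mem_nhdsWithin hmem)
  have hgron := le_gronwallBound_of_liminf_deriv_right_le (f := w) (δ := ε) (K := L) (ε := 0) hw
    (fun x hx _ hr => (hw' x hx).liminf_right_slope_le hr) (by simp [w])
    (fun x hx => by simpa using mul_le_mul_of_nonneg_left (h x (Ico_subset_Icc_self hx)) hL) t ht
  rw [gronwallBound_ε0] at hgron
  exact (h t ht).trans hgron

variable {E : Type*} [NormedAddCommGroup E] [NormedSpace ℝ E]

theorem norm_intervalIntegral_le_mul_exp_of_ae_norm_le {g : ℝ → E} {r : ℝ → ℝ} {a b L : ℝ}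
    (hL : 0 ≤ L) (hg : IntervalIntegrable g volume a b) (hr : IntervalIntegrable r volume a b)
    (hr0 : 0 ≤ r)
    (hgr : ∀ᵐ t ∂(volume.restrict (Icc a b)), ‖g t‖ ≤ L * ‖∫ s in a..t, g s‖ + r t) :
    ∀ t ∈ Icc a b, ‖∫ s in a..t, g s‖ ≤ (∫ s in a..b, r s) * exp (L * (t - a)) := by
  rcases lt_or_ge b a with hba | hab
  · exact fun t ht => absurd (ht.1.trans ht.2) hba.not_ge
  have hsub : ∀ t ∈ Icc a b, uIcc a t ⊆ uIcc a b := fun t ht =>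
    uIcc_subset_uIcc_left (Icc_subset_uIcc ht)
  have hG : ContinuousOn (fun t => ‖∫ s in a..t, g s‖) (Icc a b) := by
    have := intervalIntegral.continuousOn_primitive_interval' hg left_mem_uIcc
    rw [uIcc_of_le hab] at this
    exact this.norm
  refine le_mul_exp_of_le_add_mul_intervalIntegral hL hG fun t ht => ?_
  have hGi : IntervalIntegrable (fun s => ‖∫ u in a..s, g u‖) volume a t :=
    (hG.mono (Icc_subset_Icc_right ht.2)).intervalIntegrable_of_Icc ht.1
  have hri : IntervalIntegrable r volume a t := hr.mono_set (hsub t ht)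
  calc ‖∫ s in a..t, g s‖ ≤ ∫ s in a..t, ‖g s‖ :=
        intervalIntegral.norm_integral_le_integral_norm ht.1
    _ ≤ ∫ s in a..t, (L * ‖∫ u in a..s, g u‖ + r s) :=
        intervalIntegral.integral_mono_ae_restrict ht.1 (hg.mono_set (hsub t ht)).norm
          ((hGi.const_mul L).add hri)
          (ae_restrict_of_ae_restrict_of_subset (Icc_subset_Icc_right ht.2) hgr)
    _ = L * (∫ s in a..t, ‖∫ u in a..s, g u‖) + ∫ s in a..t, r s := by
        rw [intervalIntegral.integral_add (hGi.const_mul L) hri,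
          intervalIntegral.integral_const_mul]
    _ ≤ (∫ s in a..b, r s) + L * ∫ s in a..t, ‖∫ u in a..s, g u‖ := by
        have := intervalIntegral.integral_mono_interval le_rfl ht.1 ht.2
          (Eventually.of_forall hr0) hr
        linarith

theorem intervalIntegral_norm_primitive_sq_add_norm_sq_le {g : ℝ → E} {r : ℝ → ℝ} {a b L : ℝ}
    (hab : a ≤ b) (hL : 0 ≤ L) (hg : IntervalIntegrable g volume a b)
    (hr : IntervalIntegrable r volume a b) (hr0 : 0 ≤ r)
    (hr2 : IntervalIntegrable (fun t => r t ^ 2) volume a b)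
    (hgr : ∀ᵐ t ∂(volume.restrict (Icc a b)), ‖g t‖ ≤ L * ‖∫ s in a..t, g s‖ + r t) :
    (∫ t in a..b, ‖∫ s in a..t, g s‖ ^ 2) + ∫ t in a..b, ‖g t‖ ^ 2 ≤
      ((1 + 2 * L ^ 2) * (b - a) ^ 2 * exp (L * (b - a)) ^ 2 + 2) * ∫ t in a..b, r t ^ 2 := by
  set G : ℝ → E := fun t => ∫ s in a..t, g s
  set ε := ∫ t in a..b, r t
  set A := exp (L * (b - a))
  set I := ∫ t in a..b, r t ^ 2
  have hε : 0 ≤ ε := intervalIntegral.integral_nonneg hab fun t _ => hr0 t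
  have hGA : ∀ t ∈ Icc a b, ‖G t‖ ≤ ε * A := fun t ht =>
    (norm_intervalIntegral_le_mul_exp_of_ae_norm_le hL hg hr hr0 hgr t ht).trans <|
      mul_le_mul_of_nonneg_left (exp_le_exp.2 <| by nlinarith [ht.2]) hε
  have hCS : ε ^ 2 ≤ (b - a) * I := sq_intervalIntegral_le_mul_intervalIntegral_sq hab hr hr2
  have hG2 : IntervalIntegrable (fun t => ‖G t‖ ^ 2) volume a b := by
    have := intervalIntegral.continuousOn_primitive_interval' hg left_mem_uIcc
    exact (this.norm.pow 2).intervalIntegrable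
  have hGI : ∫ t in a..b, ‖G t‖ ^ 2 ≤ (b - a) ^ 2 * A ^ 2 * I := by
    calc ∫ t in a..b, ‖G t‖ ^ 2 ≤ ∫ _ in a..b, (ε * A) ^ 2 :=
          intervalIntegral.integral_mono_on hab hG2 intervalIntegrable_const fun t ht =>
            pow_le_pow_left₀ (norm_nonneg _) (hGA t ht) 2
      _ = (b - a) * ε ^ 2 * A ^ 2 := by
          rw [intervalIntegral.integral_const, smul_eq_mul]; ring
      _ ≤ (b - a) ^ 2 * A ^ 2 * I := by
          have := mul_le_mul_of_nonneg_left hCS (sub_nonneg.2 hab)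
          nlinarith [sq_nonneg A]
  have hg2 : ∀ᵐ t ∂(volume.restrict (Icc a b)),
      ‖g t‖ ^ 2 ≤ 2 * L ^ 2 * ‖G t‖ ^ 2 + 2 * r t ^ 2 := by
    filter_upwards [hgr] with t ht
    nlinarith [pow_le_pow_left₀ (norm_nonneg _) ht 2, sq_nonneg (L * ‖G t‖ - r t)]
  have hbound := (hG2.const_mul (2 * L ^ 2)).add (hr2.const_mul 2)
  have hg2i : IntervalIntegrable (fun t => ‖g t‖ ^ 2) volume a b := by
    refine hbound.mono_fun' (hg.def'.aestronglyMeasurable.norm.pow 2) ?_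
    rw [uIoc_of_le hab]
    filter_upwards [ae_restrict_of_ae_restrict_of_subset Ioc_subset_Icc_self hg2] with t ht
    rwa [Real.norm_of_nonneg (by positivity)]
  have hgI : ∫ t in a..b, ‖g t‖ ^ 2 ≤ 2 * L ^ 2 * (∫ t in a..b, ‖G t‖ ^ 2) + 2 * I := by
    calc ∫ t in a..b, ‖g t‖ ^ 2 ≤ ∫ t in a..b, (2 * L ^ 2 * ‖G t‖ ^ 2 + 2 * r t ^ 2) :=
          intervalIntegral.integral_mono_ae_restrict hab hg2i hbound hg2
      _ = 2 * L ^ 2 * (∫ t in a..b, ‖G t‖ ^ 2) + 2 * I := by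
          rw [intervalIntegral.integral_add (hG2.const_mul _) (hr2.const_mul _),
            intervalIntegral.integral_const_mul, intervalIntegral.integral_const_mul]
  nlinarith [mul_le_mul_of_nonneg_left hGI (by positivity : (0 : ℝ) ≤ 2 * L ^ 2)]

/-- H¹ reliability in terms of the residual.
There is a constant `C > 0` depending only on the Lipschitz constant `L₁` and the
interval length `t_end − t₀ = Tlen` such that for every absolutely continuous solution `y`
of the initial value problem and every absolutely continuous `z` with the same initial
value and square-integrable residual `R = ∂ₜ z − F(·, z)`, the squared `H¹` norm of
`y − z` is bounded by `C ∫ ‖R‖²`. -/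
theorem stmt_1 (L1 Tlen : ℝ) (hTlen : 0 < Tlen) :
    ∃ C : ℝ, 0 < C ∧
      ∀ (t0 tend : ℝ), tend - t0 = Tlen →
      ∀ (d : ℕ), 1 ≤ d →
      ∀ (F : ℝ → EuclideanSpace ℝ (Fin d) → EuclideanSpace ℝ (Fin d)),
        (∀ t ∈ Icc t0 tend, ∀ a b : EuclideanSpace ℝ (Fin d),
          ‖F t a - F t b‖ ≤ L1 * ‖a - b‖) →
      ∀ (y0 : EuclideanSpace ℝ (Fin d))
        (y y' z z' R : ℝ → EuclideanSpace ℝ (Fin d)),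
        -- `y` is absolutely continuous with derivative `y'` and solves the ODE a.e.:
        IntervalIntegrable y' volume t0 tend →
        (∀ t ∈ Icc t0 tend, y t = y0 + ∫ s in t0..t, y' s) →
        (∀ᵐ t ∂(volume.restrict (Icc t0 tend)), y' t = F t (y t)) →
        -- `z` is absolutely continuous with derivative `z'` and `z t₀ = y₀`:
        IntervalIntegrable z' volume t0 tend →
        (∀ t ∈ Icc t0 tend, z t = y0 + ∫ s in t0..t, z' s) →
        -- the residual `R` is square-integrable:
        (∀ t, R t = z' t - F t (z t)) →
        IntervalIntegrable R volume t0 tend →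
        IntervalIntegrable (fun t => ‖R t‖ ^ 2) volume t0 tend →
        -- squared H¹-norm bound:
        (∫ t in t0..tend, ‖y t - z t‖ ^ 2) + (∫ t in t0..tend, ‖y' t - z' t‖ ^ 2) ≤
          C * ∫ t in t0..tend, ‖R t‖ ^ 2 := by
  set L := max L1 0
  refine ⟨(1 + 2 * L ^ 2) * Tlen ^ 2 * exp (L * Tlen) ^ 2 + 2, by positivity, ?_⟩
  intro t0 tend hT d _ F hF y0 y y' z z' R hy'i hy hyF hz'i hz hR hRi hR2i
  have hle : t0 ≤ tend := by linarith
  have hsub : ∀ t ∈ Icc t0 tend, uIcc t0 t ⊆ uIcc t0 tend := fun t ht =>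
    uIcc_subset_uIcc_left (Icc_subset_uIcc ht)
  have herr : ∀ t ∈ Icc t0 tend, y t - z t = ∫ s in t0..t, (y' s - z' s) := fun t ht => by
    rw [hy t ht, hz t ht, intervalIntegral.integral_sub (hy'i.mono_set (hsub t ht))
      (hz'i.mono_set (hsub t ht)), add_sub_add_left_eq_sub]
  have hgr : ∀ᵐ t ∂(volume.restrict (Icc t0 tend)),
      ‖y' t - z' t‖ ≤ L * ‖∫ s in t0..t, (y' s - z' s)‖ + ‖R t‖ := by
    filter_upwards [hyF, ae_restrict_mem measurableSet_Icc] with t hyt ht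
    have hLip : ‖F t (y t) - F t (z t)‖ ≤ L * ‖y t - z t‖ :=
      (hF t ht _ _).trans (mul_le_mul_of_nonneg_right (le_max_left _ _) (norm_nonneg _))
    calc ‖y' t - z' t‖ = ‖(F t (y t) - F t (z t)) - R t‖ := by rw [hyt, hR t]; abel_nf
      _ ≤ L * ‖∫ s in t0..t, (y' s - z' s)‖ + ‖R t‖ := by
        rw [← herr t ht]; exact (norm_sub_le _ _).trans (by linarith)
  have hbound := intervalIntegral_norm_primitive_sq_add_norm_sq_le hle (le_max_right _ _)
    (hy'i.sub hz'i) hRi.norm (fun t => norm_nonneg _) hR2i hgr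
  rw [hT] at hbound
  convert hbound using 2
  refine intervalIntegral.integral_congr fun t ht => ?_
  rw [uIcc_of_le hle] at ht
  simp only [herr t ht]
end

section
/- Let F : ℝ × ℝ^d → ℝ^d satisfy |F(t,a) − F(t,b)| ≤ L₁|a − b| for all a,b ∈ ℝ^d and t ∈ [t₀, t_end]. Let y : [t₀, t_end] → ℝ^d be absolutely continuous with ∂_t y(t) = F(t, y(t)) for a.e. t and y(t₀) = y₀. Let 𝒯 be a time mesh of [t₀, t_end] and let z : [t₀, t_end] → ℝ^d be continuous with z(t₀) = y₀, such that on each T ∈ 𝒯 the residual R(t) := ∂_t z(t) − F(t, z(t)) restricted to T is absolutely continuous with square-integrable derivative and satisfies ∫_T R(t) dt = 0. Then there exists a constant C_rel > 0, depending only on L₁ and t_end − t₀ (and not on 𝒯 or z), such that ‖y − z‖²_{H¹([t₀,t_end])} ≤ C_rel² ∑_{T ∈ 𝒯} |T|² ‖∂_t R‖²_{L²(T)}. -/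
/-!
Write `e = y - z`, `ℓ = t_end - t₀` and `L = max L₁ 0`. Since `y' = F(y)` and `R = z' - F(z)`, the
defect `e' + R = F(y) - F(z)` has norm at most `L‖e‖`, so `‖e t‖ ≤ L ∫ ‖e‖ + ‖∫_{t₀}^t R‖` and
Gronwall's inequality bounds `‖e‖` uniformly by `e^{Lℓ} sup_t ‖∫_{t₀}^t R‖`; the pointwise bound
`‖e'‖ ≤ L‖e‖ + ‖R‖` then controls the `H¹` norm by this bound and `‖R‖_{L²}`.

On a mesh interval `T`, `R = c + ∫ R'` and `∫_T R = 0` force `‖c‖ ≤ ∫_T ‖R'‖`, hence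
`‖R‖² ≤ 4 (∫_T ‖R'‖)² ≤ 4 |T| ‖R'‖²_{L²(T)}` by Cauchy–Schwarz. Integrating over `T` bounds
`‖R‖²_{L²(T)}` by `4 |T|² ‖R'‖²_{L²(T)}`; and since `∫_{t₀}^t R` vanishes at every mesh point,
`‖∫_{t₀}^t R‖² ≤ 4 ℓ η²`, where `η²` is the estimator. Altogether
`C_rel² = (4 + 8 L²) ℓ² e^{2Lℓ} + 8`.
-/

open MeasureTheory Set Filter Topology
open scoped Interval

variable {E : Type*} [NormedAddCommGroup E] {a b : ℝ}

theorem sq_integral_le_mul_integral_sq {f : ℝ → ℝ} (hab : a ≤ b)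
    (hf : IntervalIntegrable f volume a b)
    (hf2 : IntervalIntegrable (fun t => f t ^ 2) volume a b) :
    (∫ t in a..b, f t) ^ 2 ≤ (b - a) * ∫ t in a..b, f t ^ 2 := by
  -- the quadratic `x ↦ ∫ (f - x)²` is nonnegative, so its discriminant is nonpositive
  have hquad : ∀ x : ℝ,
      0 ≤ (b - a) * (x * x) + (-2 * ∫ t in a..b, f t) * x + ∫ t in a..b, f t ^ 2 := fun x => by
    have h : 0 ≤ ∫ t in a..b, (f t - x) ^ 2 :=
      intervalIntegral.integral_nonneg hab fun t _ => sq_nonneg (f t - x)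
    have hexp : (fun t => (f t - x) ^ 2) = fun t => (f t ^ 2 - 2 * x * f t) + x ^ 2 := by
      ext t; ring
    rw [hexp, intervalIntegral.integral_add (hf2.sub (hf.const_mul _)) intervalIntegrable_const,
      intervalIntegral.integral_sub hf2 (hf.const_mul _), intervalIntegral.integral_const_mul,
      intervalIntegral.integral_const, smul_eq_mul] at h
    linarith
  have := discrim_le_zero hquad
  rw [discrim] at this
  linarith

theorem ae_mem_Ioo_of_mem_uIoc (hab : a ≤ b) : ∀ᵐ t ∂volume, t ∈ Ι a b → t ∈ Ioo a b := by
  filter_upwards [(Ioo_ae_eq_Ioc (a := a) (b := b) (μ := volume)).mem_iff] with t ht hmem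
  rw [uIoc_of_le hab] at hmem
  exact ht.2 hmem

theorem IntervalIntegrable.of_mem_Icc {f : ℝ → E} {μ : Measure ℝ}
    (hf : IntervalIntegrable f μ a b) {u v : ℝ} (hu : u ∈ Icc a b) (hv : v ∈ Icc a b) :
    IntervalIntegrable f μ u v :=
  hf.mono_set (uIcc_subset_uIcc (Icc_subset_uIcc hu) (Icc_subset_uIcc hv))

theorem IntervalIntegrable.sq_norm_of_sq_norm_le {R : ℝ → E} {K : ℝ} (hab : a ≤ b)
    (hR : IntervalIntegrable R volume a b) (hK : ∀ t ∈ Ioo a b, ‖R t‖ ^ 2 ≤ K) :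
    IntervalIntegrable (fun t => ‖R t‖ ^ 2) volume a b := by
  refine (intervalIntegrable_const (c := K)).mono_fun' (hR.def'.aestronglyMeasurable.norm.pow 2) ?_
  rw [EventuallyLE, ae_restrict_iff' measurableSet_uIoc]
  filter_upwards [ae_mem_Ioo_of_mem_uIoc hab] with t ht hmem
  rw [norm_pow, norm_norm]
  exact hK t (ht hmem)

theorem integral_sq_norm_le_of_sq_norm_le {R : ℝ → E} {K : ℝ} (hab : a ≤ b)
    (hK : ∀ t ∈ Ioo a b, ‖R t‖ ^ 2 ≤ K) : ∫ t in a..b, ‖R t‖ ^ 2 ≤ (b - a) * K := by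
  have h := intervalIntegral.norm_integral_le_of_norm_le_const_ae (f := fun t => ‖R t‖ ^ 2) <|
    (ae_mem_Ioo_of_mem_uIoc hab).mono fun t ht hmem => by
      rw [norm_pow, norm_norm]
      exact hK t (ht hmem)
  rw [abs_of_nonneg (sub_nonneg.2 hab), mul_comm] at h
  exact (le_abs_self _).trans h

theorem le_mul_exp_of_le_integral {e : ℝ → ℝ} {L B : ℝ} (hL : 0 ≤ L)
    (he : ContinuousOn e (Icc a b)) (he0 : ∀ t ∈ Icc a b, 0 ≤ e t)
    (hle : ∀ t ∈ Icc a b, e t ≤ L * (∫ s in a..t, e s) + B) :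
    ∀ t ∈ Icc a b, e t ≤ B * Real.exp (L * (t - a)) := by
  intro t ht
  have hab : a ≤ b := ht.1.trans ht.2
  have hint : IntervalIntegrable e volume a b := he.intervalIntegrable_of_Icc hab
  -- `ψ` dominates `e` and `ψ' = L e ≤ L ψ`, so the differential Gronwall inequality applies to `ψ`
  set ψ : ℝ → ℝ := fun t => L * (∫ s in a..t, e s) + B
  have hψ0 : ∀ t ∈ Icc a b, 0 ≤ ψ t := fun t ht => (he0 t ht).trans (hle t ht)
  have hψ : ContinuousOn ψ (Icc a b) := by
    have := intervalIntegral.continuousOn_primitive_interval' hint left_mem_uIcc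
    rw [uIcc_of_le hab] at this
    exact (this.const_smul L).add continuousOn_const
  have hψ' : ∀ s ∈ Ico a b, HasDerivWithinAt ψ (L * e s) (Ici s) s := by
    intro s hs
    have hnhds : Icc a b ∈ 𝓝[>] s := Icc_mem_nhdsGT_of_mem hs
    exact ((intervalIntegral.integral_hasDerivWithinAt_right
      (hint.of_mem_Icc (left_mem_Icc.2 hab) (Ico_subset_Icc_self hs))
      ((he.stronglyMeasurableAtFilter_nhdsWithin measurableSet_Icc s).filter_mono
        (nhdsWithin_le_of_mem hnhds))
      ((he s (Ico_subset_Icc_self hs)).mono_of_mem_nhdsWithin hnhds)).const_mul L).add_const B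
  have hB : 0 ≤ B := by simpa [ψ] using hψ0 a (left_mem_Icc.2 hab)
  have hgr := norm_le_gronwallBound_of_norm_deriv_right_le hψ hψ' (δ := B) (K := L) (ε := 0)
    (by simp [ψ, abs_of_nonneg hB])
    (fun s hs => by
      have hs' := Ico_subset_Icc_self hs
      rw [add_zero, norm_mul, Real.norm_of_nonneg hL, Real.norm_of_nonneg (he0 s hs'),
        Real.norm_of_nonneg (hψ0 s hs')]
      exact mul_le_mul_of_nonneg_left (hle s hs') hL) t ht
  rw [gronwallBound_ε0, Real.norm_of_nonneg (hψ0 t ht)] at hgr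
  exact (hle t ht).trans hgr

theorem integral_sq_norm_add_integral_sq_norm_le {e e' R : ℝ → E} {L M : ℝ} (hab : a ≤ b)
    (he : ContinuousOn e (Icc a b)) (hM : ∀ t ∈ Icc a b, ‖e t‖ ≤ M)
    (hdefect : ∀ᵐ t ∂volume.restrict (Icc a b), ‖e' t + R t‖ ≤ L * ‖e t‖)
    (hR : IntervalIntegrable (fun t => ‖R t‖ ^ 2) volume a b) :
    (∫ t in a..b, ‖e t‖ ^ 2) + ∫ t in a..b, ‖e' t‖ ^ 2 ≤
      (1 + 2 * L ^ 2) * (b - a) * M ^ 2 + 2 * ∫ t in a..b, ‖R t‖ ^ 2 := by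
  have he2 : IntervalIntegrable (fun t => ‖e t‖ ^ 2) volume a b :=
    (he.norm.pow 2).intervalIntegrable_of_Icc hab
  have hL2 : ∫ t in a..b, ‖e t‖ ^ 2 ≤ (b - a) * M ^ 2 := by
    calc ∫ t in a..b, ‖e t‖ ^ 2 ≤ ∫ _ in a..b, M ^ 2 :=
          intervalIntegral.integral_mono_on hab he2 intervalIntegrable_const fun t ht =>
            pow_le_pow_left₀ (norm_nonneg _) (hM t ht) 2
      _ = (b - a) * M ^ 2 := by rw [intervalIntegral.integral_const, smul_eq_mul]
  have hpointwise : ∀ᵐ t ∂volume.restrict (Ioc a b),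
      ‖e' t‖ ^ 2 ≤ 2 * L ^ 2 * ‖e t‖ ^ 2 + 2 * ‖R t‖ ^ 2 := by
    filter_upwards [ae_restrict_of_ae_restrict_of_subset Ioc_subset_Icc_self hdefect] with t ht
    have h : ‖e' t‖ ≤ L * ‖e t‖ + ‖R t‖ := by
      have := norm_sub_le (e' t + R t) (R t)
      rw [add_sub_cancel_right] at this
      linarith
    nlinarith [norm_nonneg (e' t), norm_nonneg (R t), sq_nonneg (L * ‖e t‖ - ‖R t‖)]
  have hH1 : ∫ t in a..b, ‖e' t‖ ^ 2 ≤
      2 * L ^ 2 * (∫ t in a..b, ‖e t‖ ^ 2) + 2 * ∫ t in a..b, ‖R t‖ ^ 2 := by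
    rw [← intervalIntegral.integral_const_mul, ← intervalIntegral.integral_const_mul,
      ← intervalIntegral.integral_add (he2.const_mul _) (hR.const_mul _),
      intervalIntegral.integral_of_le hab, intervalIntegral.integral_of_le hab]
    exact integral_mono_of_nonneg (Eventually.of_forall fun _ => by positivity)
      ((he2.const_mul _).add (hR.const_mul _)).1 hpointwise
  nlinarith [sq_nonneg L]

section NormedSpace

variable [NormedSpace ℝ E]

theorem norm_le_of_integral_eq_zero_of_norm_sub_le [CompleteSpace E] {R : ℝ → E} {c : E} {N : ℝ}
    (hab : a < b) (hR : IntervalIntegrable R volume a b) (hmean : ∫ t in a..b, R t = 0)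
    (hc : ∀ t ∈ Ioo a b, ‖R t - c‖ ≤ N) : ‖c‖ ≤ N := by
  have hint : ∫ t in a..b, (c - R t) = (b - a) • c := by
    rw [intervalIntegral.integral_sub intervalIntegrable_const hR, hmean, sub_zero,
      intervalIntegral.integral_const]
  have hbound : ‖∫ t in a..b, (c - R t)‖ ≤ N * |b - a| :=
    intervalIntegral.norm_integral_le_of_norm_le_const_ae <|
      (ae_mem_Ioo_of_mem_uIoc hab.le).mono fun t ht hmem => norm_sub_rev c (R t) ▸ hc t (ht hmem)
  rw [hint, norm_smul, Real.norm_eq_abs, mul_comm] at hbound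
  exact le_of_mul_le_mul_right hbound (abs_pos.2 (sub_ne_zero.2 hab.ne'))

theorem sq_norm_le_of_integral_eq_zero [CompleteSpace E] {R R' : ℝ → E} {c : E} (hab : a < b)
    (hR : IntervalIntegrable R volume a b) (hR' : IntervalIntegrable R' volume a b)
    (hR'2 : IntervalIntegrable (fun t => ‖R' t‖ ^ 2) volume a b)
    (hrep : ∀ t ∈ Ioo a b, R t = c + ∫ s in a..t, R' s) (hmean : ∫ t in a..b, R t = 0) :
    ∀ t ∈ Ioo a b, ‖R t‖ ^ 2 ≤ 4 * (b - a) * ∫ s in a..b, ‖R' s‖ ^ 2 := by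
  set N := ∫ s in a..b, ‖R' s‖
  have hdev : ∀ t ∈ Ioo a b, ‖R t - c‖ ≤ N := fun t ht => by
    rw [hrep t ht, add_sub_cancel_left]
    exact (intervalIntegral.norm_integral_le_integral_norm ht.1.le).trans <|
      intervalIntegral.integral_mono_interval le_rfl ht.1.le ht.2.le
        (Eventually.of_forall fun _ => norm_nonneg _) hR'.norm
  have hc := norm_le_of_integral_eq_zero_of_norm_sub_le hab hR hmean hdev
  have hCS : N ^ 2 ≤ (b - a) * ∫ s in a..b, ‖R' s‖ ^ 2 :=
    sq_integral_le_mul_integral_sq hab.le hR'.norm hR'2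
  intro t ht
  have hRt : ‖R t‖ ≤ 2 * N := by
    linarith [norm_le_norm_sub_add (R t) c, hdev t ht]
  nlinarith [norm_nonneg (R t)]

theorem norm_le_mul_exp_of_norm_add_le {e e' R : ℝ → E} {L B : ℝ} (hL : 0 ≤ L)
    (he : ContinuousOn e (Icc a b)) (he' : IntervalIntegrable e' volume a b)
    (hR : IntervalIntegrable R volume a b) (hrep : ∀ t ∈ Icc a b, e t = ∫ s in a..t, e' s)
    (hdefect : ∀ᵐ t ∂volume.restrict (Icc a b), ‖e' t + R t‖ ≤ L * ‖e t‖)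
    (hB : ∀ t ∈ Icc a b, ‖∫ s in a..t, R s‖ ≤ B) :
    ∀ t ∈ Icc a b, ‖e t‖ ≤ B * Real.exp (L * (t - a)) := by
  refine le_mul_exp_of_le_integral hL he.norm (fun _ _ => norm_nonneg _) fun t ht => ?_
  have hsub : Icc a t ⊆ Icc a b := Icc_subset_Icc_right ht.2
  have ha : a ∈ Icc a b := left_mem_Icc.2 (ht.1.trans ht.2)
  have hsplit : e t = (∫ s in a..t, (e' s + R s)) - ∫ s in a..t, R s := by
    rw [hrep t ht, intervalIntegral.integral_add (he'.of_mem_Icc ha ht) (hR.of_mem_Icc ha ht),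
      add_sub_cancel_right]
  have hlin : ‖∫ s in a..t, (e' s + R s)‖ ≤ ∫ s in a..t, L * ‖e s‖ := by
    refine intervalIntegral.norm_integral_le_of_norm_le ht.1 ?_ ?_
    · filter_upwards [(ae_restrict_iff' measurableSet_Icc).1 hdefect] with s hs hmem
      exact hs (hsub (Ioc_subset_Icc_self hmem))
    · exact ((he.mono hsub).norm.const_smul L).intervalIntegrable_of_Icc ht.1
  calc ‖e t‖ ≤ ‖∫ s in a..t, (e' s + R s)‖ + ‖∫ s in a..t, R s‖ := hsplit ▸ norm_sub_le _ _
    _ ≤ L * (∫ s in a..t, ‖e s‖) + B := by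
      rw [← intervalIntegral.integral_const_mul]; exact add_le_add hlin (hB t ht)

theorem integral_sq_norm_add_integral_sq_norm_le_mul_exp {e e' R : ℝ → E} {L B : ℝ}
    (hab : a ≤ b) (hL : 0 ≤ L) (he : ContinuousOn e (Icc a b))
    (he' : IntervalIntegrable e' volume a b) (hR : IntervalIntegrable R volume a b)
    (hrep : ∀ t ∈ Icc a b, e t = ∫ s in a..t, e' s)
    (hdefect : ∀ᵐ t ∂volume.restrict (Icc a b), ‖e' t + R t‖ ≤ L * ‖e t‖)
    (hB : ∀ t ∈ Icc a b, ‖∫ s in a..t, R s‖ ≤ B)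
    (hR2 : IntervalIntegrable (fun t => ‖R t‖ ^ 2) volume a b) :
    (∫ t in a..b, ‖e t‖ ^ 2) + ∫ t in a..b, ‖e' t‖ ^ 2 ≤
      (1 + 2 * L ^ 2) * (b - a) * (B ^ 2 * Real.exp (2 * L * (b - a))) +
        2 * ∫ t in a..b, ‖R t‖ ^ 2 := by
  have hsup := norm_le_mul_exp_of_norm_add_le hL he he' hR hrep hdefect hB
  have hB0 : 0 ≤ B := (norm_nonneg _).trans (hB a (left_mem_Icc.2 hab))
  have hM : ∀ t ∈ Icc a b, ‖e t‖ ≤ B * Real.exp (L * (b - a)) := fun t ht =>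
    (hsup t ht).trans (by gcongr; exact ht.2)
  have hexp : (B * Real.exp (L * (b - a))) ^ 2 = B ^ 2 * Real.exp (2 * L * (b - a)) := by
    rw [mul_pow, ← Real.exp_nat_mul]; push_cast; ring_nf
  exact hexp ▸ integral_sq_norm_add_integral_sq_norm_le hab he hM hdefect hR2

theorem continuousOn_Icc_of_eq_add_integral {f f' : ℝ → E} {c : E} (hab : a ≤ b)
    (hf' : IntervalIntegrable f' volume a b) (hf : ∀ t ∈ Icc a b, f t = c + ∫ s in a..t, f' s) :
    ContinuousOn f (Icc a b) := by
  have := intervalIntegral.continuousOn_primitive_interval' hf' left_mem_uIcc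
  rw [uIcc_of_le hab] at this
  exact (continuousOn_const.add this).congr hf

end NormedSpace

section Mesh

variable {n : ℕ} {pts : Fin (n + 1) → ℝ}

theorem mesh_mem_Icc (hpts : Monotone pts) (k : Fin (n + 1)) :
    pts k ∈ Icc (pts 0) (pts (Fin.last n)) :=
  ⟨hpts (Fin.zero_le k), hpts (Fin.le_last k)⟩

theorem exists_mem_Icc_of_mesh (hpts : Monotone pts) (hn : 0 < n) {t : ℝ}
    (ht : t ∈ Icc (pts 0) (pts (Fin.last n))) :
    ∃ i : Fin n, t ∈ Icc (pts i.castSucc) (pts i.succ) := by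
  suffices ∀ k : Fin (n + 1), t ≤ pts k → ∃ i : Fin n, t ∈ Icc (pts i.castSucc) (pts i.succ) from
    this _ ht.2
  intro k
  induction k using Fin.induction with
  | zero => exact fun h => ⟨⟨0, hn⟩, ht.1, h.trans (hpts (Fin.zero_le _))⟩
  | succ i ih =>
    intro h
    by_cases hi : t ≤ pts i.castSucc
    · exact ih hi
    · exact ⟨i, (not_le.1 hi).le, h⟩

open Fin.NatCast in
theorem Fin.forall_natCast_of_forall_castSucc_succ {p : Fin (n + 1) → Fin (n + 1) → Prop}
    (h : ∀ i : Fin n, p i.castSucc i.succ) : ∀ k < n, p k (k + 1 : ℕ) := by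
  intro k hk
  have hk' : ((k : ℕ) : Fin (n + 1)) = (⟨k, hk⟩ : Fin n).castSucc :=
    Fin.coe_eq_castSucc (a := ⟨k, hk⟩)
  rw [Nat.cast_succ, hk', Fin.coeSucc_eq_succ]
  exact h _

open Fin.NatCast in
theorem IntervalIntegrable.of_mesh {f : ℝ → E} {μ : Measure ℝ}
    (hf : ∀ i : Fin n, IntervalIntegrable f μ (pts i.castSucc) (pts i.succ)) :
    IntervalIntegrable f μ (pts 0) (pts (Fin.last n)) := by
  simpa using IntervalIntegrable.trans_iterate (a := fun k : ℕ => pts k)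
    (Fin.forall_natCast_of_forall_castSucc_succ
      (p := fun i j => IntervalIntegrable f μ (pts i) (pts j)) hf)

open Fin.NatCast in
theorem sum_integral_mesh [NormedSpace ℝ E] [CompleteSpace E] {f : ℝ → E} {μ : Measure ℝ}
    (hf : ∀ i : Fin n, IntervalIntegrable f μ (pts i.castSucc) (pts i.succ)) :
    ∑ i : Fin n, ∫ t in pts i.castSucc..pts i.succ, f t ∂μ =
      ∫ t in pts 0..pts (Fin.last n), f t ∂μ := by
  have := intervalIntegral.sum_integral_adjacent_intervals (a := fun k : ℕ => pts k)
    (Fin.forall_natCast_of_forall_castSucc_succ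
      (p := fun i j => IntervalIntegrable f μ (pts i) (pts j)) hf)
  rw [← Fin.sum_univ_eq_sum_range] at this
  simpa [Fin.coe_eq_castSucc, Fin.coeSucc_eq_succ] using this

noncomputable def meshEstimator (pts : Fin (n + 1) → ℝ) (R' : ℝ → E) : ℝ :=
  ∑ i : Fin n, (pts i.succ - pts i.castSucc) ^ 2 * ∫ t in pts i.castSucc..pts i.succ, ‖R' t‖ ^ 2

theorem meshEstimator_term_nonneg (hpts : Monotone pts) (R' : ℝ → E) (i : Fin n) :
    0 ≤ (pts i.succ - pts i.castSucc) ^ 2 * ∫ t in pts i.castSucc..pts i.succ, ‖R' t‖ ^ 2 :=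
  mul_nonneg (sq_nonneg _)
    (intervalIntegral.integral_nonneg (hpts i.castSucc_le_succ) fun _ _ => sq_nonneg _)

theorem meshEstimator_nonneg (hpts : Monotone pts) (R' : ℝ → E) : 0 ≤ meshEstimator pts R' :=
  Finset.sum_nonneg fun i _ => meshEstimator_term_nonneg hpts R' i

theorem le_meshEstimator (hpts : Monotone pts) (R' : ℝ → E) (i : Fin n) :
    (pts i.succ - pts i.castSucc) ^ 2 * ∫ t in pts i.castSucc..pts i.succ, ‖R' t‖ ^ 2 ≤
      meshEstimator pts R' :=
  Finset.single_le_sum (fun j _ => meshEstimator_term_nonneg hpts R' j) (Finset.mem_univ i)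

theorem integral_sq_norm_le_meshEstimator (hpts : Monotone pts) {R R' : ℝ → E}
    (hR : IntervalIntegrable R volume (pts 0) (pts (Fin.last n)))
    (hK : ∀ i : Fin n, ∀ t ∈ Ioo (pts i.castSucc) (pts i.succ), ‖R t‖ ^ 2 ≤
      4 * (pts i.succ - pts i.castSucc) * ∫ s in pts i.castSucc..pts i.succ, ‖R' s‖ ^ 2) :
    IntervalIntegrable (fun t => ‖R t‖ ^ 2) volume (pts 0) (pts (Fin.last n)) ∧
      ∫ t in pts 0..pts (Fin.last n), ‖R t‖ ^ 2 ≤ 4 * meshEstimator pts R' := by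
  have hint : ∀ i : Fin n,
      IntervalIntegrable (fun t => ‖R t‖ ^ 2) volume (pts i.castSucc) (pts i.succ) := fun i =>
    (hR.of_mem_Icc (mesh_mem_Icc hpts _) (mesh_mem_Icc hpts _)).sq_norm_of_sq_norm_le
      (hpts i.castSucc_le_succ) (hK i)
  refine ⟨IntervalIntegrable.of_mesh hint, ?_⟩
  rw [← sum_integral_mesh hint, meshEstimator, Finset.mul_sum]
  gcongr with i
  calc _ ≤ (pts i.succ - pts i.castSucc) * (4 * (pts i.succ - pts i.castSucc) *
        ∫ s in pts i.castSucc..pts i.succ, ‖R' s‖ ^ 2) :=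
        integral_sq_norm_le_of_sq_norm_le (hpts i.castSucc_le_succ) (hK i)
    _ = _ := by ring

variable [NormedSpace ℝ E]

theorem eq_add_integral_of_mesh (hpts : Monotone pts) (hn : 0 < n) {z z' : ℝ → E}
    (hz' : IntervalIntegrable z' volume (pts 0) (pts (Fin.last n)))
    (hz : ∀ i : Fin n, ∀ t ∈ Icc (pts i.castSucc) (pts i.succ),
      z t = z (pts i.castSucc) + ∫ s in pts i.castSucc..t, z' s) :
    ∀ t ∈ Icc (pts 0) (pts (Fin.last n)), z t = z (pts 0) + ∫ s in pts 0..t, z' s := by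
  have hnode : ∀ k, z (pts k) = z (pts 0) + ∫ s in pts 0..pts k, z' s := by
    intro k
    induction k using Fin.induction with
    | zero => simp
    | succ i ih =>
      rw [hz i _ (right_mem_Icc.2 (hpts i.castSucc_le_succ)), ih, add_assoc,
        intervalIntegral.integral_add_adjacent_intervals
          (hz'.of_mem_Icc (mesh_mem_Icc hpts 0) (mesh_mem_Icc hpts _))
          (hz'.of_mem_Icc (mesh_mem_Icc hpts _) (mesh_mem_Icc hpts _))]
  intro t ht
  obtain ⟨i, hi⟩ := exists_mem_Icc_of_mesh hpts hn ht
  rw [hz i t hi, hnode, add_assoc, intervalIntegral.integral_add_adjacent_intervals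
    (hz'.of_mem_Icc (mesh_mem_Icc hpts 0) (mesh_mem_Icc hpts _))
    (hz'.of_mem_Icc (mesh_mem_Icc hpts _) ht)]

theorem norm_integral_le_of_mesh (hpts : Monotone pts) (hn : 0 < n) {R : ℝ → E}
    (hR : IntervalIntegrable R volume (pts 0) (pts (Fin.last n)))
    (hmean : ∀ i : Fin n, ∫ s in pts i.castSucc..pts i.succ, R s = 0) {C : ℝ}
    (hC : ∀ i : Fin n, ∀ t ∈ Icc (pts i.castSucc) (pts i.succ),
      ‖∫ s in pts i.castSucc..t, R s‖ ≤ C) :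
    ∀ t ∈ Icc (pts 0) (pts (Fin.last n)), ‖∫ s in pts 0..t, R s‖ ≤ C := by
  have hnode : ∀ k, ∫ s in pts 0..pts k, R s = 0 := by
    intro k
    induction k using Fin.induction with
    | zero => simp
    | succ i ih =>
      rw [← intervalIntegral.integral_add_adjacent_intervals
          (hR.of_mem_Icc (mesh_mem_Icc hpts 0) (mesh_mem_Icc hpts i.castSucc))
          (hR.of_mem_Icc (mesh_mem_Icc hpts _) (mesh_mem_Icc hpts _)), ih, hmean, add_zero]
  intro t ht
  obtain ⟨i, hi⟩ := exists_mem_Icc_of_mesh hpts hn ht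
  rw [← intervalIntegral.integral_add_adjacent_intervals
    (hR.of_mem_Icc (mesh_mem_Icc hpts 0) (mesh_mem_Icc hpts i.castSucc))
    (hR.of_mem_Icc (mesh_mem_Icc hpts _) ht), hnode, zero_add]
  exact hC i t hi

theorem sq_norm_le_of_mesh [CompleteSpace E] (hpts : StrictMono pts) {R R' : ℝ → E}
    (hR : IntervalIntegrable R volume (pts 0) (pts (Fin.last n)))
    (hR' : IntervalIntegrable R' volume (pts 0) (pts (Fin.last n)))
    (hR'2 : IntervalIntegrable (fun t => ‖R' t‖ ^ 2) volume (pts 0) (pts (Fin.last n)))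
    (hrep : ∀ i : Fin n, ∃ c : E, ∀ t ∈ Ioo (pts i.castSucc) (pts i.succ),
      R t = c + ∫ s in pts i.castSucc..t, R' s)
    (hmean : ∀ i : Fin n, ∫ t in pts i.castSucc..pts i.succ, R t = 0) :
    ∀ i : Fin n, ∀ t ∈ Ioo (pts i.castSucc) (pts i.succ), ‖R t‖ ^ 2 ≤
      4 * (pts i.succ - pts i.castSucc) * ∫ s in pts i.castSucc..pts i.succ, ‖R' s‖ ^ 2 := by
  intro i
  obtain ⟨c, hc⟩ := hrep i
  have hP := mesh_mem_Icc hpts.monotone i.castSucc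
  have hQ := mesh_mem_Icc hpts.monotone i.succ
  exact sq_norm_le_of_integral_eq_zero (hpts i.castSucc_lt_succ) (hR.of_mem_Icc hP hQ)
    (hR'.of_mem_Icc hP hQ) (hR'2.of_mem_Icc hP hQ) hc (hmean i)

theorem norm_integral_le_sqrt_meshEstimator (hpts : Monotone pts) (hn : 0 < n) {R R' : ℝ → E}
    (hR : IntervalIntegrable R volume (pts 0) (pts (Fin.last n)))
    (hmean : ∀ i : Fin n, ∫ t in pts i.castSucc..pts i.succ, R t = 0)
    (hK : ∀ i : Fin n, ∀ t ∈ Ioo (pts i.castSucc) (pts i.succ), ‖R t‖ ^ 2 ≤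
      4 * (pts i.succ - pts i.castSucc) * ∫ s in pts i.castSucc..pts i.succ, ‖R' s‖ ^ 2) :
    ∀ t ∈ Icc (pts 0) (pts (Fin.last n)), ‖∫ s in pts 0..t, R s‖ ≤
      √(4 * (pts (Fin.last n) - pts 0) * meshEstimator pts R') := by
  refine norm_integral_le_of_mesh hpts hn hR hmean fun i t ht => ?_
  set P := pts i.castSucc
  set Q := pts i.succ
  set Ei := ∫ s in P..Q, ‖R' s‖ ^ 2
  have hPQ : P ≤ Q := hpts i.castSucc_le_succ
  have hEi : 0 ≤ Ei := intervalIntegral.integral_nonneg hPQ fun _ _ => sq_nonneg _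
  have hle : (Q - P) ^ 2 * Ei ≤ meshEstimator pts R' := le_meshEstimator hpts R' i
  have hlen : Q - P ≤ pts (Fin.last n) - pts 0 := by
    linarith [(mesh_mem_Icc hpts i.castSucc).1, (mesh_mem_Icc hpts i.succ).2]
  have hbound : ‖∫ s in P..t, R s‖ ≤ √(4 * (Q - P) * Ei) * (t - P) := by
    have := intervalIntegral.norm_integral_le_of_norm_le_const_ae (f := R) <|
      (ae_mem_Ioo_of_mem_uIoc ht.1).mono fun s hs hmem =>
        Real.le_sqrt_of_sq_le (hK i s ⟨(hs hmem).1, (hs hmem).2.trans_le ht.2⟩)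
    rwa [abs_of_nonneg (sub_nonneg.2 ht.1)] at this
  refine hbound.trans (Real.le_sqrt_of_sq_le ?_)
  rw [mul_pow, Real.sq_sqrt (by positivity)]
  calc 4 * (Q - P) * Ei * (t - P) ^ 2 ≤ 4 * (Q - P) * Ei * (Q - P) ^ 2 := by
        gcongr
        · linarith [ht.1]
        · linarith [ht.2]
    _ = 4 * (Q - P) * ((Q - P) ^ 2 * Ei) := by ring
    _ ≤ 4 * (pts (Fin.last n) - pts 0) * meshEstimator pts R' := by
        gcongr
        linarith

end Mesh

theorem stmt_3_general (L1 Tlen : ℝ) :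
    ∃ Crel : ℝ, 0 < Crel ∧
      ∀ (t0 tend : ℝ), tend - t0 = Tlen →
      ∀ (d : ℕ), 1 ≤ d →
      ∀ (F : ℝ → EuclideanSpace ℝ (Fin d) → EuclideanSpace ℝ (Fin d)),
        (∀ t ∈ Icc t0 tend, ∀ a b : EuclideanSpace ℝ (Fin d),
          ‖F t a - F t b‖ ≤ L1 * ‖a - b‖) →
      -- the time mesh, given by its break points:
      ∀ (n : ℕ), 0 < n →
      ∀ (pts : Fin (n + 1) → ℝ), StrictMono pts → pts 0 = t0 → pts (Fin.last n) = tend →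
      ∀ (y0 : EuclideanSpace ℝ (Fin d))
        (y y' z z' R R' : ℝ → EuclideanSpace ℝ (Fin d)),
        -- `y` is absolutely continuous with derivative `y'` and solves the ODE a.e.:
        IntervalIntegrable y' volume t0 tend →
        (∀ t ∈ Icc t0 tend, y t = y0 + ∫ s in t0..t, y' s) →
        (∀ᵐ t ∂(volume.restrict (Icc t0 tend)), y' t = F t (y t)) →
        -- `z` is continuous, `z t₀ = y₀`, and on each mesh interval absolutely
        -- continuous with derivative `z'`:
        ContinuousOn z (Icc t0 tend) →
        z t0 = y0 →
        IntervalIntegrable z' volume t0 tend →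
        IntervalIntegrable (fun t => ‖z' t‖ ^ 2) volume t0 tend →
        (∀ i : Fin n, ∀ t ∈ Icc (pts i.castSucc) (pts i.succ),
          z t = z (pts i.castSucc) + ∫ s in (pts i.castSucc)..t, z' s) →
        -- the residual and its per-interval derivative:
        (∀ t, R t = z' t - F t (z t)) →
        IntervalIntegrable R volume t0 tend →
        IntervalIntegrable R' volume t0 tend →
        IntervalIntegrable (fun t => ‖R' t‖ ^ 2) volume t0 tend →
        (∀ i : Fin n, ∃ c : EuclideanSpace ℝ (Fin d),
          ∀ t ∈ Ioo (pts i.castSucc) (pts i.succ),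
            R t = c + ∫ s in (pts i.castSucc)..t, R' s) →
        -- the residual has mean zero on each mesh interval:
        (∀ i : Fin n, (∫ t in (pts i.castSucc)..(pts i.succ), R t) = 0) →
        -- squared H¹-norm bound by the error estimator:
        (∫ t in t0..tend, ‖y t - z t‖ ^ 2) + (∫ t in t0..tend, ‖y' t - z' t‖ ^ 2) ≤
          Crel ^ 2 * ∑ i : Fin n, (pts i.succ - pts i.castSucc) ^ 2 *
            ∫ t in (pts i.castSucc)..(pts i.succ), ‖R' t‖ ^ 2 := by
  set L := max L1 0
  have hL : 0 ≤ L := le_max_right _ _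
  refine ⟨√((4 + 8 * L ^ 2) * Tlen ^ 2 * Real.exp (2 * L * Tlen) + 8), by positivity, ?_⟩
  rintro t0 tend rfl d - F hF n hn pts hpts rfl rfl y0 y y' z z' R R' hy' hy hode hz hz0 hz' -
    hzpw hR hRint hR'int hR'2 hrep hmean
  have hab : pts 0 ≤ pts (Fin.last n) := hpts.monotone (Fin.zero_le _)
  have hRsq := sq_norm_le_of_mesh hpts hRint hR'int hR'2 hrep hmean
  obtain ⟨hR2int, hR2⟩ := integral_sq_norm_le_meshEstimator hpts.monotone hRint hRsq
  have hzrep := eq_add_integral_of_mesh hpts.monotone hn hz' hzpw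
  have herep : ∀ t ∈ Icc (pts 0) (pts (Fin.last n)),
      y t - z t = ∫ s in pts 0..t, (y' s - z' s) := fun t ht => by
    rw [hy t ht, hzrep t ht, hz0, intervalIntegral.integral_sub
      (hy'.of_mem_Icc (left_mem_Icc.2 hab) ht) (hz'.of_mem_Icc (left_mem_Icc.2 hab) ht)]
    abel
  have hdefect : ∀ᵐ t ∂volume.restrict (Icc (pts 0) (pts (Fin.last n))),
      ‖(y' t - z' t) + R t‖ ≤ L * ‖y t - z t‖ := by
    filter_upwards [hode, ae_restrict_mem measurableSet_Icc] with t hyt ht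
    rw [hR, hyt, sub_add_sub_cancel]
    exact (hF t ht _ _).trans (mul_le_mul_of_nonneg_right (le_max_left _ _) (norm_nonneg _))
  have hH1 := integral_sq_norm_add_integral_sq_norm_le_mul_exp (e := fun t => y t - z t)
    (e' := fun t => y' t - z' t) hab hL
    ((continuousOn_Icc_of_eq_add_integral hab hy' hy).sub hz) (hy'.sub hz') hRint herep hdefect
    (norm_integral_le_sqrt_meshEstimator hpts.monotone hn hRint hmean hRsq) hR2int
  have hη := meshEstimator_nonneg hpts.monotone R'
  rw [Real.sq_sqrt (mul_nonneg (mul_nonneg zero_le_four (sub_nonneg.2 hab)) hη)] at hH1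
  show _ ≤ _ * meshEstimator pts R'
  rw [Real.sq_sqrt (by positivity)]
  linarith

/-- reliability of the residual error estimator.
There is a constant `C_rel > 0` depending only on the Lipschitz constant `L₁` and the
interval length `t_end − t₀ = Tlen` (not on the mesh or on `z`) such that for every time
mesh of `[t₀, t_end]` and every continuous `z` with `z t₀ = y₀` whose residual
`R = ∂ₜ z − F(·, z)` is, on each mesh interval `T`, absolutely continuous with
square-integrable derivative `R'` and has mean zero `∫_T R = 0`, the exact solution `y`
satisfies `‖y − z‖²_{H¹} ≤ C_rel² ∑_T |T|² ‖∂ₜ R‖²_{L²(T)}`. -/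
theorem stmt_3 (L1 Tlen : ℝ) (hTlen : 0 < Tlen) :
    ∃ Crel : ℝ, 0 < Crel ∧
      ∀ (t0 tend : ℝ), tend - t0 = Tlen →
      ∀ (d : ℕ), 1 ≤ d →
      ∀ (F : ℝ → EuclideanSpace ℝ (Fin d) → EuclideanSpace ℝ (Fin d)),
        (∀ t ∈ Icc t0 tend, ∀ a b : EuclideanSpace ℝ (Fin d),
          ‖F t a - F t b‖ ≤ L1 * ‖a - b‖) →
      -- the time mesh, given by its break points:
      ∀ (n : ℕ), 0 < n →
      ∀ (pts : Fin (n + 1) → ℝ), StrictMono pts → pts 0 = t0 → pts (Fin.last n) = tend →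
      ∀ (y0 : EuclideanSpace ℝ (Fin d))
        (y y' z z' R R' : ℝ → EuclideanSpace ℝ (Fin d)),
        -- `y` is absolutely continuous with derivative `y'` and solves the ODE a.e.:
        IntervalIntegrable y' volume t0 tend →
        (∀ t ∈ Icc t0 tend, y t = y0 + ∫ s in t0..t, y' s) →
        (∀ᵐ t ∂(volume.restrict (Icc t0 tend)), y' t = F t (y t)) →
        -- `z` is continuous, `z t₀ = y₀`, and on each mesh interval absolutely
        -- continuous with derivative `z'`:
        ContinuousOn z (Icc t0 tend) →
        z t0 = y0 →
        IntervalIntegrable z' volume t0 tend →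
        IntervalIntegrable (fun t => ‖z' t‖ ^ 2) volume t0 tend →
        (∀ i : Fin n, ∀ t ∈ Icc (pts i.castSucc) (pts i.succ),
          z t = z (pts i.castSucc) + ∫ s in (pts i.castSucc)..t, z' s) →
        -- the residual and its per-interval derivative:
        (∀ t, R t = z' t - F t (z t)) →
        IntervalIntegrable R volume t0 tend →
        IntervalIntegrable R' volume t0 tend →
        IntervalIntegrable (fun t => ‖R' t‖ ^ 2) volume t0 tend →
        (∀ i : Fin n, ∃ c : EuclideanSpace ℝ (Fin d),
          ∀ t ∈ Ioo (pts i.castSucc) (pts i.succ),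
            R t = c + ∫ s in (pts i.castSucc)..t, R' s) →
        -- the residual has mean zero on each mesh interval:
        (∀ i : Fin n, (∫ t in (pts i.castSucc)..(pts i.succ), R t) = 0) →
        -- squared H¹-norm bound by the error estimator:
        (∫ t in t0..tend, ‖y t - z t‖ ^ 2) + (∫ t in t0..tend, ‖y' t - z' t‖ ^ 2) ≤
          Crel ^ 2 * ∑ i : Fin n, (pts i.succ - pts i.castSucc) ^ 2 *
            ∫ t in (pts i.castSucc)..(pts i.succ), ‖R' t‖ ^ 2 :=
  stmt_3_general L1 Tlen
end

section
/- Let 𝒯 be a time mesh of [t₀, t_end] and let R : [t₀, t_end] → ℝ^d be such that on each interval T ∈ 𝒯 the restriction R|_T is absolutely continuous with square-integrable derivative and ∫_T R(s) ds = 0. Then for every t ∈ [t₀, t_end] one has |∫_{t₀}^{t} R(s) ds| ≤ max_{T ∈ 𝒯} |T|^{3/2} ‖∂_t R‖_{L²(T)}. -/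
open MeasureTheory Set
open scoped Interval

/-!
On a mesh interval `T = [a, b]` the mean-zero condition writes `R s` as the average over
`σ ∈ T` of `R s - R σ`, and each such difference is at most `∫_T ‖R'‖`; by Cauchy–Schwarz this
gives `‖R‖ ≤ |T|^{1/2} ‖R'‖_{L²(T)}` on `T`. Since `R` integrates to zero over every mesh
interval, `∫_{t₀}^t R` is an integral of `R` over a part of the single mesh interval containing
`t`, hence at most `|T| · |T|^{1/2} ‖R'‖_{L²(T)}`.
-/

namespace intervalIntegral

variable {E : Type*} [NormedAddCommGroup E] {a b : ℝ}

theorem _root_.IntervalIntegrable.of_mem_Icc_s5 {f : ℝ → E}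
    (hf : IntervalIntegrable f volume a b) {x y : ℝ} (hx : x ∈ Icc a b) (hy : y ∈ Icc a b) :
    IntervalIntegrable f volume x y :=
  hf.mono_set (uIcc_subset_uIcc (Icc_subset_uIcc hx) (Icc_subset_uIcc hy))

variable [NormedSpace ℝ E]

theorem sq_integral_le_mul_integral_sq {f : ℝ → ℝ} (hab : a ≤ b)
    (hf : IntervalIntegrable f volume a b)
    (hf2 : IntervalIntegrable (fun x => f x ^ 2) volume a b) :
    (∫ x in a..b, f x) ^ 2 ≤ (b - a) * ∫ x in a..b, f x ^ 2 := by
  rcases hab.eq_or_lt with rfl | hab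
  · simp
  set M := ∫ x in a..b, f x
  set J := ∫ x in a..b, f x ^ 2
  -- the variance of `f` about its mean `M / (b - a)`, scaled by `(b - a) ^ 2`
  have hvar : (∫ x in a..b, ((b - a) * f x - M) ^ 2) = (b - a) * ((b - a) * J - M ^ 2) := by
    have hexp : ∀ x, ((b - a) * f x - M) ^ 2 =
        ((b - a) ^ 2 * f x ^ 2 - (2 * (b - a) * M) * f x) + M ^ 2 := fun x => by ring
    simp_rw [hexp]
    rw [integral_add ((hf2.const_mul _).sub (hf.const_mul _)) intervalIntegrable_const,
      integral_sub (hf2.const_mul _) (hf.const_mul _), integral_const_mul, integral_const_mul,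
      integral_const, smul_eq_mul]
    ring
  have hnonneg : 0 ≤ ∫ x in a..b, ((b - a) * f x - M) ^ 2 :=
    integral_nonneg hab.le fun x _ => sq_nonneg _
  rw [hvar] at hnonneg
  linarith [(mul_nonneg_iff_of_pos_left (sub_pos.mpr hab)).mp hnonneg]

theorem integral_le_sqrt_mul_sqrt_integral_sq {f : ℝ → ℝ} (hab : a ≤ b)
    (hf : IntervalIntegrable f volume a b)
    (hf2 : IntervalIntegrable (fun x => f x ^ 2) volume a b) :
    ∫ x in a..b, f x ≤ √(b - a) * √(∫ x in a..b, f x ^ 2) := by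
  rw [← Real.sqrt_mul (sub_nonneg.mpr hab)]
  exact (le_abs_self _).trans (Real.abs_le_sqrt (sq_integral_le_mul_integral_sq hab hf hf2))

theorem norm_integral_le_of_forall_Ioo {f : ℝ → E} {C : ℝ} (hab : a ≤ b)
    (hC : ∀ x ∈ Ioo a b, ‖f x‖ ≤ C) : ‖∫ x in a..b, f x‖ ≤ C * (b - a) := by
  rw [integral_of_le hab, integral_Ioc_eq_integral_Ioo]
  simpa only [Real.volume_real_Ioo_of_le hab] using
    norm_setIntegral_le_of_norm_le_const (μ := volume) measure_Ioo_lt_top hC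

theorem integral_eq_zero_of_forall_integral_pieces_eq_zero {n : ℕ} (p : Fin (n + 1) → ℝ)
    {f : ℝ → E} (hf : ∀ i : Fin n, IntervalIntegrable f volume (p i.castSucc) (p i.succ))
    (h : ∀ i : Fin n, ∫ x in p i.castSucc..p i.succ, f x = 0) (k : Fin (n + 1)) :
    ∫ x in p 0..p k, f x = 0 := by
  suffices ∀ k, IntervalIntegrable f volume (p 0) (p k) ∧ ∫ x in p 0..p k, f x = 0 from
    (this k).2
  intro k
  induction k using Fin.induction with
  | zero => simp
  | succ i ih =>
    refine ⟨ih.1.trans (hf i), ?_⟩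
    rw [← integral_add_adjacent_intervals ih.1 (hf i), ih.2, h i, add_zero]

variable {R R' : ℝ → E} {c : E}

theorem norm_sub_le_integral_norm_of_eq_add_integral
    (hR : ∀ s ∈ Ioo a b, R s = c + ∫ u in a..s, R' u) (hR' : IntervalIntegrable R' volume a b)
    {s σ : ℝ} (hs : s ∈ Ioo a b) (hσ : σ ∈ Ioo a b) :
    ‖R s - R σ‖ ≤ ∫ u in a..b, ‖R' u‖ := by
  have hab : a ≤ b := hs.1.le.trans hs.2.le
  have hint : ∀ x ∈ Ioo a b, IntervalIntegrable R' volume a x := fun x hx =>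
    hR'.of_mem_Icc_s5 (left_mem_Icc.mpr hab) (Ioo_subset_Icc_self hx)
  rw [hR s hs, hR σ hσ, add_sub_add_left_eq_sub,
    integral_interval_sub_left (hint s hs) (hint σ hσ), integral_of_le hab]
  calc ‖∫ u in σ..s, R' u‖ ≤ ∫ u in Ι σ s, ‖R' u‖ := norm_integral_le_integral_norm_uIoc
    _ ≤ ∫ u in Ioc a b, ‖R' u‖ :=
      setIntegral_mono_set ((intervalIntegrable_iff_integrableOn_Ioc_of_le hab).mp hR'.norm)
        (Filter.Eventually.of_forall fun _ => norm_nonneg _)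
        (Filter.Eventually.of_forall
          (Ioc_subset_Ioc (le_min hσ.1.le hs.1.le) (max_le hσ.2.le hs.2.le)))

variable [CompleteSpace E]

theorem norm_le_of_integral_eq_zero {R : ℝ → E} {x : E} {M : ℝ} (hab : a < b)
    (hR : IntervalIntegrable R volume a b) (hmean : ∫ s in a..b, R s = 0)
    (hM : ∀ σ ∈ Ioo a b, ‖x - R σ‖ ≤ M) : ‖x‖ ≤ M := by
  have havg : (b - a) • x = ∫ σ in a..b, (x - R σ) := by
    rw [integral_sub intervalIntegrable_const hR, hmean, sub_zero, integral_const]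
  have hbound := norm_integral_le_of_forall_Ioo hab.le hM
  rw [← havg, norm_smul, Real.norm_of_nonneg (sub_pos.mpr hab).le, mul_comm] at hbound
  exact le_of_mul_le_mul_right hbound (sub_pos.mpr hab)

theorem norm_integral_le_rpow_mul_sqrt_integral_norm_deriv_sq {t : ℝ} (hab : a < b)
    (ht : t ∈ Icc a b) (hR : ∀ s ∈ Ioo a b, R s = c + ∫ u in a..s, R' u)
    (hRi : IntervalIntegrable R volume a b) (hR'i : IntervalIntegrable R' volume a b)
    (hR'sq : IntervalIntegrable (fun u => ‖R' u‖ ^ 2) volume a b)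
    (hmean : ∫ s in a..b, R s = 0) :
    ‖∫ s in a..t, R s‖ ≤ (b - a) ^ ((3 : ℝ) / 2) * √(∫ u in a..b, ‖R' u‖ ^ 2) := by
  set M := ∫ u in a..b, ‖R' u‖
  have hpt : ∀ s ∈ Ioo a b, ‖R s‖ ≤ M := fun s hs =>
    norm_le_of_integral_eq_zero hab hRi hmean fun σ hσ =>
      norm_sub_le_integral_norm_of_eq_add_integral hR hR'i hs hσ
  have hM : M ≤ √(b - a) * √(∫ u in a..b, ‖R' u‖ ^ 2) :=
    integral_le_sqrt_mul_sqrt_integral_sq hab.le hR'i.norm hR'sq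
  have hpow : (b - a) ^ ((3 : ℝ) / 2) = √(b - a) * (b - a) := by
    rw [show (3 : ℝ) / 2 = 1 / 2 + 1 by norm_num, Real.rpow_add (sub_pos.mpr hab),
      Real.rpow_one, Real.sqrt_eq_rpow]
  calc ‖∫ s in a..t, R s‖ ≤ M * (t - a) :=
        norm_integral_le_of_forall_Ioo ht.1 fun s hs => hpt s ⟨hs.1, hs.2.trans_le ht.2⟩
    _ ≤ (√(b - a) * √(∫ u in a..b, ‖R' u‖ ^ 2)) * (b - a) :=
        mul_le_mul hM (by linarith [ht.2]) (sub_nonneg.mpr ht.1) (by positivity)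
    _ = (b - a) ^ ((3 : ℝ) / 2) * √(∫ u in a..b, ‖R' u‖ ^ 2) := by rw [hpow]; ring

end intervalIntegral

theorem Fin.exists_castSucc_le_le_succ {α : Type*} [LinearOrder α] {n : ℕ} (hn : 0 < n)
    (p : Fin (n + 1) → α) {t : α} (h0 : p 0 ≤ t) (hlast : t ≤ p (Fin.last n)) :
    ∃ i : Fin n, p i.castSucc ≤ t ∧ t ≤ p i.succ := by
  by_contra! h
  have hle : ∀ k, p k ≤ t := fun k => Fin.induction h0 (fun i hi => (h i hi).le) k
  obtain ⟨m, rfl⟩ := Nat.exists_eq_add_one_of_ne_zero hn.ne'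
  exact (h (Fin.last m) (hle _)).not_ge (by rwa [Fin.succ_last])

open intervalIntegral in
theorem stmt_5_general
    (d : ℕ) (t0 tend : ℝ)
    -- the time mesh, given by its break points:
    (n : ℕ) (hn : 0 < n) (pts : Fin (n + 1) → ℝ)
    (hmono : StrictMono pts) (hfirst : pts 0 = t0) (hlast : pts (Fin.last n) = tend)
    (R R' : ℝ → EuclideanSpace ℝ (Fin d))
    (hRint : IntervalIntegrable R volume t0 tend)
    (hR'int : IntervalIntegrable R' volume t0 tend)
    (hR'sq : IntervalIntegrable (fun t => ‖R' t‖ ^ 2) volume t0 tend)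
    -- on each mesh interval, `R` is absolutely continuous with derivative `R'`:
    (hRAC : ∀ i : Fin n, ∃ c : EuclideanSpace ℝ (Fin d),
      ∀ t ∈ Ioo (pts i.castSucc) (pts i.succ),
        R t = c + ∫ s in (pts i.castSucc)..t, R' s)
    -- `R` has mean zero on each mesh interval:
    (hmean : ∀ i : Fin n, (∫ t in (pts i.castSucc)..(pts i.succ), R t) = 0) :
    ∀ t ∈ Icc t0 tend,
      ‖∫ s in t0..t, R s‖ ≤
        Finset.univ.sup' (Finset.univ_nonempty_iff.mpr (Fin.pos_iff_nonempty.mp hn))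
          (fun i : Fin n => (pts i.succ - pts i.castSucc) ^ ((3 : ℝ) / 2) *
            Real.sqrt (∫ t in (pts i.castSucc)..(pts i.succ), ‖R' t‖ ^ 2)) := by
  intro t ht
  have hmesh : ∀ k, pts k ∈ Icc t0 tend := fun k =>
    ⟨hfirst ▸ hmono.monotone (Fin.zero_le k), hlast ▸ hmono.monotone (Fin.le_last k)⟩
  obtain ⟨i, hi⟩ :=
    Fin.exists_castSucc_le_le_succ hn pts (hfirst.trans_le ht.1) (ht.2.trans hlast.ge)
  obtain ⟨c, hc⟩ := hRAC i
  have hbefore : ∫ s in t0..pts i.castSucc, R s = 0 := by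
    rw [← hfirst]
    exact integral_eq_zero_of_forall_integral_pieces_eq_zero pts
      (fun _ => hRint.of_mem_Icc_s5 (hmesh _) (hmesh _)) hmean _
  rw [← integral_add_adjacent_intervals (hRint.of_mem_Icc_s5 (hfirst ▸ hmesh 0) (hmesh _))
    (hRint.of_mem_Icc_s5 (hmesh _) ht), hbefore, zero_add]
  refine (norm_integral_le_rpow_mul_sqrt_integral_norm_deriv_sq (hmono i.castSucc_lt_succ) hi hc
    (hRint.of_mem_Icc_s5 (hmesh _) (hmesh _)) (hR'int.of_mem_Icc_s5 (hmesh _) (hmesh _))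
    (hR'sq.of_mem_Icc_s5 (hmesh _) (hmesh _)) (hmean i)).trans ?_
  exact Finset.le_sup'_of_le _ (Finset.mem_univ i) le_rfl

/-- bound on the primitive of a piecewise mean-zero function.
If `R` is, on each interval of a time mesh of `[t₀, t_end]`, absolutely continuous with
square-integrable derivative `R'` and has mean zero, then for every `t ∈ [t₀, t_end]`
one has `‖∫_{t₀}^{t} R‖ ≤ max_{T ∈ 𝒯} |T|^{3/2} ‖∂ₜ R‖_{L²(T)}`. -/
theorem stmt_5
    (d : ℕ) (hd : 1 ≤ d) (t0 tend : ℝ) (ht : t0 < tend)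
    -- the time mesh, given by its break points:
    (n : ℕ) (hn : 0 < n) (pts : Fin (n + 1) → ℝ)
    (hmono : StrictMono pts) (hfirst : pts 0 = t0) (hlast : pts (Fin.last n) = tend)
    (R R' : ℝ → EuclideanSpace ℝ (Fin d))
    (hRint : IntervalIntegrable R volume t0 tend)
    (hR'int : IntervalIntegrable R' volume t0 tend)
    (hR'sq : IntervalIntegrable (fun t => ‖R' t‖ ^ 2) volume t0 tend)
    -- on each mesh interval, `R` is absolutely continuous with derivative `R'`:
    (hRAC : ∀ i : Fin n, ∃ c : EuclideanSpace ℝ (Fin d),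
      ∀ t ∈ Ioo (pts i.castSucc) (pts i.succ),
        R t = c + ∫ s in (pts i.castSucc)..t, R' s)
    -- `R` has mean zero on each mesh interval:
    (hmean : ∀ i : Fin n, (∫ t in (pts i.castSucc)..(pts i.succ), R t) = 0) :
    ∀ t ∈ Icc t0 tend,
      ‖∫ s in t0..t, R s‖ ≤
        Finset.univ.sup' (Finset.univ_nonempty_iff.mpr (Fin.pos_iff_nonempty.mp hn))
          (fun i : Fin n => (pts i.succ - pts i.castSucc) ^ ((3 : ℝ) / 2) *
            Real.sqrt (∫ t in (pts i.castSucc)..(pts i.succ), ‖R' t‖ ^ 2)) :=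
  stmt_5_general d t0 tend n hn pts hmono hfirst hlast R R' hRint hR'int hR'sq hRAC hmean
end

section
/- Let θ = 1/2, λ > 0, c > 0 with θλc < 1, and let (τ_n)_{n∈ℕ} be positive real numbers with ∑_n τ_n = S < ∞ and τ_n < c for all n (so that 1 − θλτ_n > 1 − θλc > 0). Then every finite partial product satisfies ∏_n (1 + θλτ_n)/(1 − θλτ_n) ≤ exp( Sθλ − (S/c) log(1 − θλc) ). -/
/-!
Each factor is bounded separately: `1 + x ≤ exp x` handles the numerator, and for the
denominator Bernoulli's inequality `(1 - a c) ^ (τ / c) ≤ 1 - a τ` (valid as `0 ≤ τ / c ≤ 1`)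
gives `1 / (1 - a τ) ≤ exp (-(τ / c) log (1 - a c))`. Hence every factor is at most
`exp (τ K)` with `K = a - log (1 - a c) / c ≥ 0`, and a partial product is at most
`exp (K ∑ τ) ≤ exp (K S)`.
-/

open Real Finset

lemma exp_div_mul_log_one_sub_le {a c t : ℝ} (hc : 0 < c) (ht : 0 ≤ t) (htc : t ≤ c)
    (hac : a * c < 1) : exp (t / c * log (1 - a * c)) ≤ 1 - a * t := by
  have hbase : 0 < 1 - a * c := by linarith
  calc exp (t / c * log (1 - a * c))
      = (1 + -(a * c)) ^ (t / c) := by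
        rw [rpow_def_of_pos (by linarith), mul_comm, sub_eq_add_neg]
    _ ≤ 1 + t / c * -(a * c) :=
        rpow_one_add_le_one_add_mul_self (by linarith) (div_nonneg ht hc.le)
          ((div_le_one hc).2 htc)
    _ = 1 - a * t := by field_simp; ring

lemma one_add_div_one_sub_le_exp {a c t : ℝ} (hc : 0 < c) (ht : 0 ≤ t) (htc : t ≤ c)
    (hac : a * c < 1) :
    (1 + a * t) / (1 - a * t) ≤ exp (t * (a - log (1 - a * c) / c)) := by
  have hden := exp_div_mul_log_one_sub_le hc ht htc hac
  calc (1 + a * t) / (1 - a * t)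
      ≤ exp (a * t) / exp (t / c * log (1 - a * c)) :=
        div_le_div₀ (exp_pos _).le (by linarith [add_one_le_exp (a * t)]) (exp_pos _) hden
    _ = exp (t * (a - log (1 - a * c) / c)) := by
        rw [← exp_sub]; ring_nf

/-- boundedness of the Gronwall-type product.
Let `θ = 1/2`, `λ > 0`, `c > 0` with `θ λ c < 1`, and let `(τ_n)` be positive reals with
`∑ τ_n = S < ∞` and `τ_n < c` for all `n`. Then every finite partial product satisfies
`∏ (1 + θ λ τ_n) / (1 − θ λ τ_n) ≤ exp (S θ λ − (S / c) log (1 − θ λ c))`. -/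
theorem stmt_8
    (lam c S : ℝ) (hlam : 0 < lam) (hc : 0 < c)
    (hsmall : (1 / 2 : ℝ) * lam * c < 1)
    (τ : ℕ → ℝ) (hτpos : ∀ n, 0 < τ n) (hτc : ∀ n, τ n < c)
    (hsummable : Summable τ) (hsum : (∑' n, τ n) = S) :
    ∀ s : Finset ℕ,
      (∏ n ∈ s, (1 + (1 / 2 : ℝ) * lam * τ n) / (1 - (1 / 2 : ℝ) * lam * τ n)) ≤
        Real.exp (S * ((1 / 2 : ℝ) * lam) -
          S / c * Real.log (1 - (1 / 2 : ℝ) * lam * c)) := by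
  intro s
  set a : ℝ := (1 / 2 : ℝ) * lam
  have ha : 0 < a := by positivity
  set K := a - log (1 - a * c) / c
  have hK : 0 ≤ K := by
    have : log (1 - a * c) ≤ 0 := log_nonpos (by linarith) (by nlinarith)
    have : log (1 - a * c) / c ≤ 0 := div_nonpos_of_nonpos_of_nonneg this hc.le
    linarith
  have hfactor_nonneg : ∀ n ∈ s, 0 ≤ (1 + a * τ n) / (1 - a * τ n) := fun n _ => by
    have : a * τ n < a * c := mul_lt_mul_of_pos_left (hτc n) ha
    exact div_nonneg (by nlinarith [hτpos n]) (by linarith)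
  have hpartial : ∑ n ∈ s, τ n ≤ S :=
    hsum ▸ hsummable.sum_le_tsum s fun n _ => (hτpos n).le
  calc ∏ n ∈ s, (1 + a * τ n) / (1 - a * τ n)
      ≤ ∏ n ∈ s, exp (τ n * K) := prod_le_prod hfactor_nonneg fun n _ =>
        one_add_div_one_sub_le_exp hc (hτpos n).le (hτc n).le hsmall
    _ = exp ((∑ n ∈ s, τ n) * K) := by rw [← exp_sum, sum_mul]
    _ ≤ exp (S * K) := exp_le_exp.2 (mul_le_mul_of_nonneg_right hpartial hK)
    _ = exp (S * a - S / c * log (1 - a * c)) := by congr 1; ring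
end

section
/- Let s > 0, 0 < q < 1, C_lin > 0, B > 0, and let (N_j)_{j≥0} and (η_j)_{j≥0} be sequences of positive real numbers such that N_j ≤ (B / η_j)^{1/s} for all j, and η_ℓ ≤ C_lin q^{ℓ−j} η_j for all j ≤ ℓ. Then for every ℓ ∈ ℕ one has ∑_{j=0}^{ℓ} N_j ≤ (B C_lin)^{1/s} / (1 − q^{1/s}) · η_ℓ^{−1/s}. -/
/-! Linear convergence gives `η_ℓ ≤ C_lin q^{ℓ-j} η_j`, so rate optimality bounds each
`N_j` by `(B C_lin)^{1/s} η_ℓ^{-1/s} (q^{1/s})^{ℓ-j}`: the costs of the earlier iterations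
decay geometrically backwards from `ℓ`, and summing the geometric series in `q^{1/s} < 1`
gives the factor `1 / (1 - q^{1/s})`. -/

open Finset

lemma div_rpow_le_mul_rpow_neg {B c p x y : ℝ} (hB : 0 ≤ B) (hp : 0 ≤ p) (hx : 0 < x)
    (hy : 0 < y) (hyx : y ≤ c * x) : (B / x) ^ p ≤ (B * c) ^ p * y ^ (-p) := by
  have hdiv : B / x ≤ B * c / y := by
    rw [div_le_div_iff₀ hx hy, mul_assoc]
    exact mul_le_mul_of_nonneg_left hyx hB
  have hc : 0 ≤ c := nonneg_of_mul_nonneg_left (hy.le.trans hyx) hx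
  calc (B / x) ^ p ≤ (B * c / y) ^ p := Real.rpow_le_rpow (by positivity) hdiv hp
    _ = (B * c) ^ p * y ^ (-p) := by
      rw [Real.div_rpow (by positivity) hy.le, Real.rpow_neg hy.le, div_eq_mul_inv]

lemma sum_range_le_div_one_sub_of_le_geometric {f : ℕ → ℝ} {M r : ℝ} {n : ℕ}
    (hM : 0 ≤ M) (hr0 : 0 ≤ r) (hr1 : r < 1) (hf : ∀ j ≤ n, f j ≤ M * r ^ (n - j)) :
    ∑ j ∈ range (n + 1), f j ≤ M / (1 - r) := by
  calc ∑ j ∈ range (n + 1), f j ≤ ∑ j ∈ range (n + 1), M * r ^ (n - j) :=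
        sum_le_sum fun j hj => hf j (Nat.lt_succ_iff.mp (mem_range.mp hj))
    _ = M * ∑ k ∈ range (n + 1), r ^ k := by
        rw [← mul_sum, ← sum_range_reflect (r ^ ·) (n + 1)]
        simp only [Nat.add_sub_cancel]
    _ ≤ M * (r ^ 0 / (1 - r)) :=
        mul_le_mul_of_nonneg_left (range_eq_Ico (n + 1) ▸ geom_sum_Ico_le_of_lt_one hr0 hr1) hM
    _ = M / (1 - r) := by rw [pow_zero, mul_one_div]

theorem stmt_9_general
    (s q Clin B : ℝ) (hs : 0 < s) (hq0 : 0 < q) (hq1 : q < 1)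
    (hClin : 0 < Clin) (hB : 0 < B)
    (N η : ℕ → ℝ) (hη : ∀ j, 0 < η j)
    (hopt : ∀ j, N j ≤ (B / η j) ^ (1 / s))
    (hlin : ∀ j ℓ : ℕ, j ≤ ℓ → η ℓ ≤ Clin * q ^ (ℓ - j) * η j) :
    ∀ ℓ : ℕ,
      (∑ j ∈ Finset.range (ℓ + 1), N j) ≤
        (B * Clin) ^ (1 / s) / (1 - q ^ (1 / s)) * (η ℓ) ^ (-(1 / s)) := by
  intro ℓ
  have hp : 0 ≤ 1 / s := (one_div_pos.mpr hs).le
  have hN_le : ∀ j ≤ ℓ,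
      N j ≤ (B * Clin) ^ (1 / s) * η ℓ ^ (-(1 / s)) * (q ^ (1 / s)) ^ (ℓ - j) := by
    intro j hj
    calc N j ≤ (B / η j) ^ (1 / s) := hopt j
      _ ≤ (B * (Clin * q ^ (ℓ - j))) ^ (1 / s) * η ℓ ^ (-(1 / s)) :=
          div_rpow_le_mul_rpow_neg hB.le hp (hη j) (hη ℓ) (hlin j ℓ hj)
      _ = (B * Clin) ^ (1 / s) * η ℓ ^ (-(1 / s)) * (q ^ (1 / s)) ^ (ℓ - j) := by
          rw [← mul_assoc, Real.mul_rpow (by positivity) (pow_nonneg hq0.le _),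
            ← Real.rpow_pow_comm hq0.le]
          ring
  calc ∑ j ∈ range (ℓ + 1), N j
      ≤ (B * Clin) ^ (1 / s) * η ℓ ^ (-(1 / s)) / (1 - q ^ (1 / s)) :=
        sum_range_le_div_one_sub_of_le_geometric
          (mul_nonneg (by positivity) (Real.rpow_nonneg (hη ℓ).le _)) (Real.rpow_nonneg hq0.le _)
          (Real.rpow_lt_one hq0.le hq1 (one_div_pos.mpr hs)) hN_le
    _ = (B * Clin) ^ (1 / s) / (1 - q ^ (1 / s)) * η ℓ ^ (-(1 / s)) := by ring

/-- cumulative cost bound from rate optimality and linear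
convergence. If `N_j ≤ (B / η_j)^{1/s}` for all `j` and `η_ℓ ≤ C_lin q^{ℓ−j} η_j` for
all `j ≤ ℓ`, then `∑_{j=0}^{ℓ} N_j ≤ (B C_lin)^{1/s} / (1 − q^{1/s}) · η_ℓ^{−1/s}`. -/
theorem stmt_9
    (s q Clin B : ℝ) (hs : 0 < s) (hq0 : 0 < q) (hq1 : q < 1)
    (hClin : 0 < Clin) (hB : 0 < B)
    (N η : ℕ → ℝ) (hN : ∀ j, 0 < N j) (hη : ∀ j, 0 < η j)
    (hopt : ∀ j, N j ≤ (B / η j) ^ (1 / s))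
    (hlin : ∀ j ℓ : ℕ, j ≤ ℓ → η ℓ ≤ Clin * q ^ (ℓ - j) * η j) :
    ∀ ℓ : ℕ,
      (∑ j ∈ Finset.range (ℓ + 1), N j) ≤
        (B * Clin) ^ (1 / s) / (1 - q ^ (1 / s)) * (η ℓ) ^ (-(1 / s)) :=
  stmt_9_general s q Clin B hs hq0 hq1 hClin hB N η hη hopt hlin
end

section
/- Let F : ℝ × ℝ^d → ℝ^d be continuously differentiable with |F(t,a) − F(t,b)| ≤ L₁|a − b| and with total Jacobian DF satisfying |DF(t₁,a) − DF(t₂,b)| ≤ L₂(|t₁ − t₂| + |a − b|) for all a,b ∈ ℝ^d and t, t₁, t₂ ∈ [t₀, t_end]. Fix p ≥ 1 and M > 0. Let 𝒯 be a time mesh of [t₀,t_end], 𝒯̂ a refinement of 𝒯, and let u ∈ S^p(𝒯), û ∈ S^p(𝒯̂) satisfy u(t₀) = û(t₀), together with the uniform bounds ‖u‖_{H¹} ≤ M, ‖û‖_{H¹} ≤ M, and |T| · sup_{t∈T} |∂_t u(t)| ≤ M for all T ∈ 𝒯. Then there exists C_stab > 0, depending only on L₁, L₂, p, M and t_end − t₀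 (and not on 𝒯, 𝒯̂, u, û), such that | (∑_{T ∈ 𝒯 ∩ 𝒯̂} η(u; T)²)^{1/2} − (∑_{T ∈ 𝒯 ∩ 𝒯̂} η(û; T)²)^{1/2} | ≤ C_stab ‖u − û‖_{H¹([t₀,t_end])}. -/
open MeasureTheory Set
open scoped Classical

noncomputable section

/-- `ℝ^d` with the Euclidean norm. -/
abbrev Euc (d : ℕ) := EuclideanSpace ℝ (Fin d)

/-- A time mesh of `[t₀, t_end]`: a finite partition into closed intervals determined
by break points `t₀ = pts 0 < pts 1 < … < pts n = t_end`. -/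
structure TimeMesh (t0 tend : ℝ) where
  n : ℕ
  npos : 0 < n
  pts : Fin (n + 1) → ℝ
  mono : StrictMono pts
  first : pts 0 = t0
  last : pts (Fin.last n) = tend

namespace TimeMesh

variable {t0 tend : ℝ}

/-- Left endpoint of the `i`-th mesh interval. -/
def a (M : TimeMesh t0 tend) (i : Fin M.n) : ℝ := M.pts i.castSucc

/-- Right endpoint of the `i`-th mesh interval. -/
def b (M : TimeMesh t0 tend) (i : Fin M.n) : ℝ := M.pts i.succ

/-- Length `|T|` of the `i`-th mesh interval. -/
def len (M : TimeMesh t0 tend) (i : Fin M.n) : ℝ := M.b i - M.a i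

/-- Maximal step size `max_{T ∈ 𝒯} |T|`. -/
def maxStep (M : TimeMesh t0 tend) : ℝ :=
  Finset.univ.sup' (Finset.univ_nonempty_iff.mpr (Fin.pos_iff_nonempty.mp M.npos)) M.len

/-- `M'.Refines M`: every interval of `M'` is contained in an interval of `M`. -/
def Refines (M' M : TimeMesh t0 tend) : Prop :=
  ∀ j : Fin M'.n, ∃ i : Fin M.n, Icc (M'.a j) (M'.b j) ⊆ Icc (M.a i) (M.b i)

/-- The `i`-th interval of `M` is also an interval of `M'` (a common, non-refined
interval, i.e. an element of `𝒯 ∩ 𝒯'`). -/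
def Common (M M' : TimeMesh t0 tend) (i : Fin M.n) : Prop :=
  ∃ j : Fin M'.n, M'.a j = M.a i ∧ M'.b j = M.b i

end TimeMesh

/-- `f : ℝ → ℝ^d` is, on each interval of the mesh `M`, a polynomial of degree `≤ p`
(the space `P^p(𝒯)`; jumps at the break points are allowed). -/
def PWPoly (d : ℕ) {t0 tend : ℝ} (M : TimeMesh t0 tend) (p : ℕ)
    (f : ℝ → Euc d) : Prop :=
  ∀ i : Fin M.n, ∃ c : Fin (p + 1) → Euc d,
    ∀ t ∈ Ioo (M.a i) (M.b i), f t = ∑ j : Fin (p + 1), (t ^ (j : ℕ)) • c j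

/-- The squared `H¹([t₀,t_end])`-norm of a function `u` with derivative `u'`. -/
def h1Sq (d : ℕ) (t0 tend : ℝ) (u u' : ℝ → Euc d) : ℝ :=
  (∫ t in t0..tend, ‖u t‖ ^ 2) + ∫ t in t0..tend, ‖u' t‖ ^ 2

/-- `u`, together with its piecewise derivatives `u'`, `u''`, is a member of `S^p(𝒯)`:
continuous on `[t₀,t_end]` and piecewise polynomial of degree `≤ p`, with
`u' = ∂ₜ u` and `u'' = ∂ₜ² u` on the interior of every mesh interval. -/
structure SPMem (d : ℕ) {t0 tend : ℝ} (M : TimeMesh t0 tend) (p : ℕ)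
    (u u' u'' : ℝ → Euc d) : Prop where
  cont : ContinuousOn u (Icc t0 tend)
  poly : PWPoly d M p u
  deriv1 : ∀ i : Fin M.n, ∀ t ∈ Ioo (M.a i) (M.b i), HasDerivAt u (u' t) t
  deriv2 : ∀ i : Fin M.n, ∀ t ∈ Ioo (M.a i) (M.b i), HasDerivAt u' (u'' t) t

/-- `u ∈ S^p(𝒯)` (with piecewise derivatives `u'`, `u''`) is a solution of the
continuous Petrov–Galerkin scheme: `u t₀ = y₀` and
`∫ (∂ₜ u − F(t, u)) · v dt = 0` for all test functions `v ∈ P^{p−1}(𝒯)`. -/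
structure PGSol (d : ℕ) {t0 tend : ℝ} (M : TimeMesh t0 tend) (p : ℕ)
    (F : ℝ → Euc d → Euc d) (y0 : Euc d) (u u' u'' : ℝ → Euc d) : Prop where
  mem : SPMem d M p u u' u''
  init : u t0 = y0
  galerkin : ∀ v : ℝ → Euc d, PWPoly d M (p - 1) v →
    (∫ t in t0..tend, (inner ℝ (u' t - F t (u t)) (v t) : ℝ)) = 0

/-- The squared local error estimator
`η(w; T)² = |T|² ∫_T ‖∂ₜ F(·,w) + ∇_y F(·,w) ∂ₜ w − ∂ₜ² w‖²` on the interval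
`T = [aa, bb]`, where `Ft`, `Fy` are the partial derivatives of `F`. -/
def etaSq (d : ℕ) (Ft : ℝ → Euc d → Euc d) (Fy : ℝ → Euc d → (Euc d →L[ℝ] Euc d))
    (w w' w'' : ℝ → Euc d) (aa bb : ℝ) : ℝ :=
  (bb - aa) ^ 2 * ∫ t in aa..bb, ‖Ft t (w t) + Fy t (w t) (w' t) - w'' t‖ ^ 2

/-!
On a common interval `T` both `u` and `û` are polynomials, and `η(w; T)` is `|T|` times the
`L²(T)` norm of the residual `R(w) = ∂ₜF(·,w) + ∇_yF(·,w) ∂ₜw − ∂ₜ²w`. The triangle inequality,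
first in `L²(T)` and then in `ℓ²` over the common intervals, reduces the claim to bounding
`|T| ‖R(u) − R(û)‖_{L²(T)}`. The bounds on the Jacobian control `R(u) − R(û)` pointwise by
`|u − û|`, `|∂ₜ(u − û)|`, `|u − û| |∂ₜû|` and `|∂ₜ²(u − û)|`. The last term is absorbed by the
inverse estimate `|T| ‖q'‖_{L²(T)} ≤ C_p ‖q‖_{L²(T)}` for polynomials of degree `≤ p`
(compactness on `[0,1]`, then scaling), and `|u − û|` is bounded uniformly by `‖u − û‖_{H¹}`
because `(u − û)(t₀) = 0` and `|e(t)|² = ∫ 2⟨e, ∂ₜe⟩ ≤ ‖e‖²_{H¹}`. Summing over the disjoint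
common intervals gives the bound.
-/

open Polynomial

theorem abs_sqrt_sum_sub_sqrt_sum_le {ι : Type*} (s : Finset ι) {f g : ι → ℝ}
    (hf : ∀ i ∈ s, 0 ≤ f i) (hg : ∀ i ∈ s, 0 ≤ g i) :
    |√(∑ i ∈ s, f i) - √(∑ i ∈ s, g i)| ≤ √(∑ i ∈ s, (√(f i) - √(g i)) ^ 2) := by
  have norm_toLp (h : ι → ℝ) :
      ‖(WithLp.toLp 2 fun i : s => h i : EuclideanSpace ℝ s)‖ = √(∑ i ∈ s, h i ^ 2) := by
    rw [EuclideanSpace.norm_eq, ← Finset.sum_coe_sort s]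
    simp
  have sum_sq_sqrt {h : ι → ℝ} (hh : ∀ i ∈ s, 0 ≤ h i) : ∑ i ∈ s, √(h i) ^ 2 = ∑ i ∈ s, h i :=
    Finset.sum_congr rfl fun i hi => Real.sq_sqrt (hh i hi)
  have key := abs_norm_sub_norm_le (WithLp.toLp 2 fun i : s => √(f i) : EuclideanSpace ℝ s)
    (WithLp.toLp 2 fun i : s => √(g i))
  rw [norm_toLp (fun i => √(f i)), norm_toLp (fun i => √(g i)), sum_sq_sqrt hf,
    sum_sq_sqrt hg] at key
  exact key.trans_eq (norm_toLp fun i => √(f i) - √(g i))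

theorem sqrt_integral_norm_sq_eq_lpNorm {α E : Type*} [MeasurableSpace α] {μ : Measure α}
    [NormedAddCommGroup E] {f : α → E} (hf : AEStronglyMeasurable f μ) :
    √(∫ x, ‖f x‖ ^ 2 ∂μ) = lpNorm f 2 μ := by
  rw [lpNorm_eq_integral_norm_rpow_toReal two_ne_zero ENNReal.ofNat_ne_top hf,
    Real.sqrt_eq_rpow]
  simp

theorem abs_sqrt_integral_norm_sq_sub_le {α E : Type*} [MeasurableSpace α] {μ : Measure α}
    [NormedAddCommGroup E] {f g : α → E} (hf : MemLp f 2 μ) (hg : MemLp g 2 μ) :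
    |√(∫ x, ‖f x‖ ^ 2 ∂μ) - √(∫ x, ‖g x‖ ^ 2 ∂μ)| ≤ √(∫ x, ‖f x - g x‖ ^ 2 ∂μ) := by
  rw [sqrt_integral_norm_sq_eq_lpNorm hf.1, sqrt_integral_norm_sq_eq_lpNorm hg.1,
    show √(∫ x, ‖f x - g x‖ ^ 2 ∂μ) = lpNorm (f - g) 2 μ from
      sqrt_integral_norm_sq_eq_lpNorm (hf.sub hg).1, abs_sub_le_iff, lpNorm_sub_comm]
  exact ⟨sub_left_le_of_le_add (lpNorm_le_lpNorm_add_lpNorm_sub hg one_le_two),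
    sub_left_le_of_le_add (lpNorm_le_lpNorm_add_lpNorm_sub' hf one_le_two)⟩

theorem ContinuousOn.memLp_restrict_Ioc {E : Type*} [NormedAddCommGroup E] {f : ℝ → E}
    {a b : ℝ} (hf : ContinuousOn f (Icc a b)) (p : ENNReal) :
    MemLp f p (volume.restrict (Ioc a b)) := by
  obtain ⟨C, hC⟩ := isCompact_Icc.exists_bound_of_continuousOn hf
  exact .of_bound ((hf.mono Ioc_subset_Icc_self).aestronglyMeasurable measurableSet_Ioc) C <|
    (ae_restrict_iff' measurableSet_Ioc).2 (.of_forall fun x hx => hC x (Ioc_subset_Icc_self hx))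

theorem sq_sqrt_mul_integral_sub_le {E : Type*} [NormedAddCommGroup E] {f g : ℝ → E}
    {a b : ℝ} (hab : a ≤ b) (hf : ContinuousOn f (Icc a b)) (hg : ContinuousOn g (Icc a b))
    (c : ℝ) :
    (√(c ^ 2 * ∫ t in a..b, ‖f t‖ ^ 2) - √(c ^ 2 * ∫ t in a..b, ‖g t‖ ^ 2)) ^ 2 ≤
      c ^ 2 * ∫ t in a..b, ‖f t - g t‖ ^ 2 := by
  have hmink := abs_sqrt_integral_norm_sq_sub_le (hf.memLp_restrict_Ioc 2)
    (hg.memLp_restrict_Ioc 2)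
  simp only [← intervalIntegral.integral_of_le hab] at hmink
  rw [Real.sqrt_mul (sq_nonneg c), Real.sqrt_mul (sq_nonneg c), ← mul_sub, mul_pow,
    Real.sq_sqrt (sq_nonneg c)]
  gcongr
  exact (sq_le_sq.2 (hmink.trans_eq (abs_of_nonneg (Real.sqrt_nonneg _)).symm)).trans_eq
    (Real.sq_sqrt (intervalIntegral.integral_nonneg hab fun t _ => sq_nonneg _))

theorem ContinuousOn.apply_of_norm_sub_le {E F : Type*} [NormedAddCommGroup E]
    [NormedAddCommGroup F] {f : ℝ → E → F} {s : Set ℝ} {L : ℝ}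
    (hf : ∀ t₁ ∈ s, ∀ t₂ ∈ s, ∀ x y, ‖f t₁ x - f t₂ y‖ ≤ L * (|t₁ - t₂| + ‖x - y‖))
    {w : ℝ → E} (hw : ContinuousOn w s) : ContinuousOn (fun t => f t (w t)) s := by
  have hlip : LipschitzOnWith (2 * |L|).toNNReal (Function.uncurry f) (s ×ˢ univ) :=
    .of_dist_le' fun p hp q hq => by
      rw [dist_eq_norm, Prod.dist_eq, Real.dist_eq, dist_eq_norm]
      calc ‖f p.1 p.2 - f q.1 q.2‖ ≤ |L| * (|p.1 - q.1| + ‖p.2 - q.2‖) :=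
            (hf p.1 hp.1 q.1 hq.1 p.2 q.2).trans (by gcongr; exact le_abs_self L)
        _ ≤ 2 * |L| * max |p.1 - q.1| ‖p.2 - q.2‖ := by
            nlinarith [le_max_left |p.1 - q.1| ‖p.2 - q.2‖,
              le_max_right |p.1 - q.1| ‖p.2 - q.2‖, abs_nonneg L]
  exact hlip.continuousOn.comp (continuousOn_id.prodMk hw) fun t ht => ⟨ht, mem_univ _⟩

theorem exists_le_mul_of_homogeneous {E : Type*} [NormedAddCommGroup E] [NormedSpace ℝ E]
    [FiniteDimensional ℝ E] {F G : E → ℝ} (hF : Continuous F) (hG : Continuous G)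
    (hF_smul : ∀ (r : ℝ) x, F (r • x) = r ^ 2 * F x)
    (hG_smul : ∀ (r : ℝ) x, G (r • x) = r ^ 2 * G x) (hG_pos : ∀ x ≠ 0, 0 < G x) :
    ∃ C, ∀ x, F x ≤ C * G x := by
  have hG_sphere : ∀ y ∈ Metric.sphere (0 : E) 1, 0 < G y := fun y hy =>
    hG_pos y (ne_zero_of_mem_sphere one_ne_zero ⟨y, hy⟩)
  obtain ⟨C, hC⟩ := (isCompact_sphere (0 : E) 1).bddAbove_image
    (hF.continuousOn.div hG.continuousOn fun y hy => (hG_sphere y hy).ne')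
  refine ⟨C, fun x => ?_⟩
  rcases eq_or_ne x 0 with rfl | hx
  · have hF0 : F 0 = 0 := by simpa using hF_smul 0 0
    have hG0 : G 0 = 0 := by simpa using hG_smul 0 0
    simp [hF0, hG0]
  set y : E := ‖x‖⁻¹ • x
  have hy : y ∈ Metric.sphere (0 : E) 1 := by simp [y, norm_smul, hx]
  have hxy : x = ‖x‖ • y := by simp [y, smul_smul, hx]
  have hFy : F y ≤ C * G y := (div_le_iff₀ (hG_sphere y hy)).1 (hC ⟨y, hy, rfl⟩)
  rw [hxy, hF_smul, hG_smul]
  nlinarith [sq_nonneg ‖x‖]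

theorem integral_eval_sq_pos {Q : ℝ[X]} (hQ : Q ≠ 0) : 0 < ∫ x in (0:ℝ)..1, Q.eval x ^ 2 := by
  obtain ⟨x₀, hx₀, hroot⟩ :=
    ((Set.Icc_infinite zero_lt_one).sdiff (Q.finite_setOfPred_isRoot hQ)).nonempty
  exact intervalIntegral.integral_pos zero_lt_one (Q.continuous.pow 2).continuousOn
    (fun _ _ => sq_nonneg _) ⟨x₀, hx₀, pow_two_pos_of_ne_zero hroot⟩

theorem exists_integral_derivative_sq_le_unitInterval (m : ℕ) :
    ∃ K, ∀ P : ℝ[X], P.natDegree ≤ m →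
      ∫ x in (0:ℝ)..1, P.derivative.eval x ^ 2 ≤ K * ∫ x in (0:ℝ)..1, P.eval x ^ 2 := by
  let comb (B : Fin (m + 1) → ℝ[X]) (c : Fin (m + 1) → ℝ) : ℝ[X] := ∑ k, C (c k) * B k
  have continuous_integral (B : Fin (m + 1) → ℝ[X]) :
      Continuous fun c => ∫ x in (0:ℝ)..1, (comb B c).eval x ^ 2 := by
    apply intervalIntegral.continuous_parametric_intervalIntegral_of_continuous'
    simp only [comb, eval_finsetSum, eval_mul, eval_C]
    fun_prop
  have integral_smul (B : Fin (m + 1) → ℝ[X]) (r : ℝ) (c : Fin (m + 1) → ℝ) :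
      ∫ x in (0:ℝ)..1, (comb B (r • c)).eval x ^ 2 =
        r ^ 2 * ∫ x in (0:ℝ)..1, (comb B c).eval x ^ 2 := by
    rw [← intervalIntegral.integral_const_mul]
    congr 1 with x
    simp only [comb, eval_finsetSum, eval_mul, eval_C, Pi.smul_apply, smul_eq_mul, mul_assoc,
      ← Finset.mul_sum]
    ring
  have comb_ne_zero {c : Fin (m + 1) → ℝ} (hc : c ≠ 0) : comb (fun k => X ^ (k : ℕ)) c ≠ 0 := by
    obtain ⟨k, hk⟩ := Function.ne_iff.1 hc
    intro h
    have := congrArg (coeff · k) h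
    simp [comb, finsetSum_coeff, Fin.val_inj] at this
    exact hk this
  obtain ⟨K, hK⟩ := exists_le_mul_of_homogeneous (continuous_integral _) (continuous_integral _)
    (integral_smul fun k => derivative (X ^ (k : ℕ))) (integral_smul fun k => X ^ (k : ℕ))
    fun c hc => integral_eval_sq_pos (comb_ne_zero hc)
  refine ⟨K, fun P hP => ?_⟩
  have hPc : P = comb (fun k => X ^ (k : ℕ)) fun k => P.coeff k := by
    conv_lhs => rw [P.as_sum_range' (m + 1) (Nat.lt_succ_of_le hP)]
    simp [comb, ← Fin.sum_univ_eq_sum_range, C_mul_X_pow_eq_monomial]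
  have hP' : derivative P = comb (fun k => derivative (X ^ (k : ℕ))) fun k => P.coeff k := by
    conv_lhs => rw [hPc]
    simp only [comb, map_sum, derivative_C_mul]
  have := hK fun k => P.coeff k
  rwa [← hP', ← hPc] at this

theorem exists_sq_mul_integral_derivative_sq_le (m : ℕ) :
    ∃ K, ∀ a b : ℝ, a < b → ∀ P : ℝ[X], P.natDegree ≤ m →
      (b - a) ^ 2 * ∫ t in a..b, P.derivative.eval t ^ 2 ≤ K * ∫ t in a..b, P.eval t ^ 2 := by
  obtain ⟨K, hK⟩ := exists_integral_derivative_sq_le_unitInterval m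
  refine ⟨K, fun a b hab P hP => ?_⟩
  have hh : 0 < b - a := sub_pos.2 hab
  have hQ : (P.comp (C (b - a) * X + C a)).natDegree ≤ m := by
    rwa [natDegree_comp, natDegree_linear hh.ne', mul_one]
  have unit_integral (f : ℝ → ℝ) :
      ∫ x in (0:ℝ)..1, f ((b - a) * x + a) = (b - a)⁻¹ * ∫ t in a..b, f t := by
    simp [intervalIntegral.integral_comp_mul_add f hh.ne']
  have key := hK _ hQ
  simp only [derivative_comp, eval_comp, eval_mul, eval_add, eval_C, eval_X, derivative_add,
    derivative_mul, derivative_C, derivative_X, zero_mul, mul_one, add_zero,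
    zero_add, mul_pow, intervalIntegral.integral_const_mul] at key
  rw [unit_integral fun t => P.derivative.eval t ^ 2, unit_integral fun t => P.eval t ^ 2] at key
  calc (b - a) ^ 2 * ∫ t in a..b, P.derivative.eval t ^ 2
      = (b - a) * ((b - a) ^ 2 * ((b - a)⁻¹ * ∫ t in a..b, P.derivative.eval t ^ 2)) := by
        field_simp
    _ ≤ (b - a) * (K * ((b - a)⁻¹ * ∫ t in a..b, P.eval t ^ 2)) := by gcongr
    _ = K * ∫ t in a..b, P.eval t ^ 2 := by field_simp

section PolyVec

variable {d : ℕ}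

def polyVec (P : Fin d → ℝ[X]) (t : ℝ) : Euc d := WithLp.toLp 2 fun ℓ => (P ℓ).eval t

theorem polyVec_sub (P Q : Fin d → ℝ[X]) (t : ℝ) :
    polyVec (fun ℓ => P ℓ - Q ℓ) t = polyVec P t - polyVec Q t := by
  ext ℓ
  simp [polyVec]

theorem continuous_polyVec (P : Fin d → ℝ[X]) : Continuous (polyVec P) :=
  (PiLp.continuous_toLp 2 _).comp (continuous_pi fun ℓ => (P ℓ).continuous)

theorem hasDerivAt_polyVec (P : Fin d → ℝ[X]) (t : ℝ) :
    HasDerivAt (polyVec P) (polyVec (fun ℓ => derivative (P ℓ)) t) t :=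
  (EuclideanSpace.equiv (Fin d) ℝ).symm.hasFDerivAt.comp_hasDerivAt t
    (hasDerivAt_pi.2 fun ℓ => (P ℓ).hasDerivAt t)

theorem norm_polyVec_sq (P : Fin d → ℝ[X]) (t : ℝ) :
    ‖polyVec P t‖ ^ 2 = ∑ ℓ, (P ℓ).eval t ^ 2 := by
  simp [polyVec, EuclideanSpace.norm_sq_eq]

def HasInverseEstimate (d p : ℕ) (K : ℝ) : Prop :=
  ∀ a b : ℝ, a < b → ∀ P : Fin d → ℝ[X], (∀ ℓ, (P ℓ).natDegree ≤ p) →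
    (b - a) ^ 2 * ∫ t in a..b, ‖polyVec (fun ℓ => derivative (P ℓ)) t‖ ^ 2 ≤
      K * ∫ t in a..b, ‖polyVec P t‖ ^ 2

theorem exists_hasInverseEstimate (p : ℕ) : ∃ K, 0 ≤ K ∧ ∀ d, HasInverseEstimate d p K := by
  obtain ⟨K, hK⟩ := exists_sq_mul_integral_derivative_sq_le p
  refine ⟨max K 0, le_max_right K 0, fun d a b hab P hP => ?_⟩
  have integrable (Q : ℝ[X]) : IntervalIntegrable (fun t => Q.eval t ^ 2) volume a b :=
    (Q.continuous.pow 2).intervalIntegrable a b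
  simp only [norm_polyVec_sq]
  rw [intervalIntegral.integral_finsetSum fun ℓ _ => integrable _,
    intervalIntegral.integral_finsetSum fun ℓ _ => integrable _, Finset.mul_sum, Finset.mul_sum]
  exact Finset.sum_le_sum fun ℓ _ => (hK a b hab (P ℓ) (hP ℓ)).trans <|
    mul_le_mul_of_nonneg_right (le_max_left K 0)
      (intervalIntegral.integral_nonneg hab.le fun _ _ => sq_nonneg _)

end PolyVec

namespace TimeMesh

variable {t0 tend : ℝ} (M : TimeMesh t0 tend)

theorem a_lt_b (i : Fin M.n) : M.a i < M.b i := M.mono (Fin.castSucc_lt_succ (i := i))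

theorem t0_le_a (i : Fin M.n) : t0 ≤ M.a i :=
  M.first.symm.trans_le (M.mono.monotone (Fin.zero_le _))

theorem b_le_tend (i : Fin M.n) : M.b i ≤ tend :=
  (M.mono.monotone (Fin.le_last _)).trans_eq M.last

theorem Icc_subset (i : Fin M.n) : Icc (M.a i) (M.b i) ⊆ Icc t0 tend :=
  Icc_subset_Icc (M.t0_le_a i) (M.b_le_tend i)

theorem t0_le_tend (M : TimeMesh t0 tend) : t0 ≤ tend :=
  (M.t0_le_a ⟨0, M.npos⟩).trans ((M.a_lt_b _).le.trans (M.b_le_tend _))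

theorem exists_mem_Ioc {t : ℝ} (ht : t ∈ Ioc t0 tend) : ∃ i, t ∈ Ioc (M.a i) (M.b i) := by
  by_contra! h
  have : ∀ k, M.pts k < t :=
    Fin.induction (M.first.trans_lt ht.1) fun i hi => lt_of_not_ge fun hle => h i ⟨hi, hle⟩
  exact (this (Fin.last _)).not_ge (ht.2.trans_eq M.last.symm)

theorem exists_mem_Ioo {t : ℝ} (ht : t ∈ Ioc t0 tend) (ht' : t ∉ range M.pts) :
    ∃ i, t ∈ Ioo (M.a i) (M.b i) := by
  obtain ⟨i, hi⟩ := M.exists_mem_Ioc ht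
  exact ⟨i, hi.1, hi.2.lt_of_ne fun h => ht' ⟨_, h.symm⟩⟩

theorem pairwise_disjoint_Ioc :
    Pairwise fun i j => Disjoint (Ioc (M.a i) (M.b i)) (Ioc (M.a j) (M.b j)) := by
  have key {i j : Fin M.n} (hij : i < j) : Disjoint (Ioc (M.a i) (M.b i)) (Ioc (M.a j) (M.b j)) :=
    Ioc_disjoint_Ioc_of_le (M.mono.monotone (Fin.succ_le_castSucc_iff.2 hij))
  intro i j hij
  rcases hij.lt_or_gt with h | h
  exacts [key h, (key h).symm]

theorem sum_integral_le {φ : ℝ → ℝ} (hφ : ∀ t ∈ Icc t0 tend, 0 ≤ φ t)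
    (hint : IntervalIntegrable φ volume t0 tend) (S : Finset (Fin M.n)) :
    ∑ i ∈ S, ∫ t in M.a i..M.b i, φ t ≤ ∫ t in t0..tend, φ t := by
  rw [intervalIntegral.integral_of_le M.t0_le_tend]
  simp only [intervalIntegral.integral_of_le (M.a_lt_b _).le]
  rw [← integral_biUnion_finset S (fun _ _ => measurableSet_Ioc)
    (M.pairwise_disjoint_Ioc.set_pairwise _)
    fun i _ => hint.1.mono_set (Ioc_subset_Ioc (M.t0_le_a i) (M.b_le_tend i))]
  refine setIntegral_mono_set hint.1 ?_ (Filter.Eventually.of_forall ?_)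
  · exact (ae_restrict_iff' measurableSet_Ioc).2
      (.of_forall fun t ht => hφ t (Ioc_subset_Icc_self ht))
  · exact iUnion₂_subset fun i _ => Ioc_subset_Ioc (M.t0_le_a i) (M.b_le_tend i)

def PiecewiseContinuous {E : Type*} [TopologicalSpace E] (f : ℝ → E) : Prop :=
  ∀ i, ∃ g : ℝ → E, ContinuousOn g (Icc (M.a i) (M.b i)) ∧ EqOn f g (Ioo (M.a i) (M.b i))

variable {M} {E F G : Type*} [NormedAddCommGroup E] [TopologicalSpace F] [TopologicalSpace G]

theorem _root_.ContinuousOn.piecewiseContinuous {f : ℝ → E}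
    (hf : ContinuousOn f (Icc t0 tend)) : M.PiecewiseContinuous f :=
  fun i => ⟨f, hf.mono (M.Icc_subset i), eqOn_refl _ _⟩

theorem PiecewiseContinuous.comp₂ {φ : E → F → G} (hφ : Continuous (Function.uncurry φ))
    {f : ℝ → E} {g : ℝ → F} (hf : M.PiecewiseContinuous f) (hg : M.PiecewiseContinuous g) :
    M.PiecewiseContinuous fun t => φ (f t) (g t) := fun i => by
  obtain ⟨f₁, hf₁, hff₁⟩ := hf i
  obtain ⟨g₁, hg₁, hgg₁⟩ := hg i
  exact ⟨fun t => φ (f₁ t) (g₁ t), hφ.comp_continuousOn (hf₁.prodMk hg₁),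
    fun t ht => by simp only [hff₁ ht, hgg₁ ht]⟩

theorem PiecewiseContinuous.comp {φ : E → F} (hφ : Continuous φ) {f : ℝ → E}
    (hf : M.PiecewiseContinuous f) : M.PiecewiseContinuous fun t => φ (f t) := fun i => by
  obtain ⟨f₁, hf₁, hff₁⟩ := hf i
  exact ⟨fun t => φ (f₁ t), hφ.comp_continuousOn hf₁, fun t ht => by simp only [hff₁ ht]⟩

theorem PiecewiseContinuous.intervalIntegrable {f : ℝ → E} (hf : M.PiecewiseContinuous f) :
    IntervalIntegrable f volume t0 tend := by
  rw [intervalIntegrable_iff_integrableOn_Ioc_of_le M.t0_le_tend]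
  refine IntegrableOn.mono_set (integrableOn_finite_iUnion.2 fun i => ?_)
    fun t ht => mem_iUnion.2 (M.exists_mem_Ioc ht)
  obtain ⟨g, hg, hfg⟩ := hf i
  rw [integrableOn_Ioc_iff_integrableOn_Ioo]
  exact (hg.integrableOn_Icc.mono_set Ioo_subset_Icc_self).congr_fun hfg.symm measurableSet_Ioo

theorem Refines.exists_Ioo_subset {Mf Mc : TimeMesh t0 tend} (h : Mf.Refines Mc) (j : Fin Mf.n) :
    ∃ i, Icc (Mf.a j) (Mf.b j) ⊆ Icc (Mc.a i) (Mc.b i) ∧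
      Ioo (Mf.a j) (Mf.b j) ⊆ Ioo (Mc.a i) (Mc.b i) := by
  obtain ⟨i, hi⟩ := h j
  obtain ⟨ha, hb⟩ := (Icc_subset_Icc_iff (Mf.a_lt_b j).le).1 hi
  exact ⟨i, hi, Ioo_subset_Ioo ha hb⟩

theorem PiecewiseContinuous.of_refines {Mf Mc : TimeMesh t0 tend} (h : Mf.Refines Mc)
    {f : ℝ → F} (hf : Mc.PiecewiseContinuous f) : Mf.PiecewiseContinuous f := fun j => by
  obtain ⟨i, hIcc, hIoo⟩ := h.exists_Ioo_subset j
  obtain ⟨g, hg, hfg⟩ := hf i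
  exact ⟨g, hg.mono hIcc, hfg.mono hIoo⟩

end TimeMesh

theorem TimeMesh.norm_sq_le_integral_add_integral {t0 tend : ℝ} (M : TimeMesh t0 tend)
    {E : Type*} [NormedAddCommGroup E] [InnerProductSpace ℝ E] {e e' : ℝ → E}
    (he : ContinuousOn e (Icc t0 tend)) (he0 : e t0 = 0)
    (hd : ∀ i, ∀ s ∈ Ioo (M.a i) (M.b i), HasDerivAt e (e' s) s)
    (he' : M.PiecewiseContinuous e') {t : ℝ} (ht : t ∈ Icc t0 tend) :
    ‖e t‖ ^ 2 ≤ (∫ s in t0..tend, ‖e s‖ ^ 2) + ∫ s in t0..tend, ‖e' s‖ ^ 2 := by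
  have hpc := he.piecewiseContinuous (M := M)
  have hinner : M.PiecewiseContinuous fun s => 2 * inner ℝ (e s) (e' s) :=
    hpc.comp₂ (φ := fun x y => 2 * inner ℝ x y) (by fun_prop) he'
  have hsum : M.PiecewiseContinuous fun s => ‖e s‖ ^ 2 + ‖e' s‖ ^ 2 :=
    hpc.comp₂ (φ := fun x y => ‖x‖ ^ 2 + ‖y‖ ^ 2) (by fun_prop) he'
  have hsub : uIcc t0 t ⊆ uIcc t0 tend := uIcc_subset_uIcc_left (mem_uIcc_of_le ht.1 ht.2)
  have ftc : ∫ s in t0..t, 2 * inner ℝ (e s) (e' s) = ‖e t‖ ^ 2 := by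
    rw [integral_eq_of_hasDerivAt_off_countable_of_le (fun s => ‖e s‖ ^ 2) _ ht.1
      (countable_range M.pts) ((he.mono (Icc_subset_Icc_right ht.2)).norm.pow 2) ?_
      (hinner.intervalIntegrable.mono_set hsub), he0]
    · simp
    rintro s ⟨hs, hs'⟩
    obtain ⟨i, hi⟩ := M.exists_mem_Ioo ⟨hs.1, hs.2.le.trans ht.2⟩ hs'
    exact (hd i s hi).norm_sq
  calc ‖e t‖ ^ 2 = ∫ s in t0..t, 2 * inner ℝ (e s) (e' s) := ftc.symm
    _ ≤ ∫ s in t0..t, (‖e s‖ ^ 2 + ‖e' s‖ ^ 2) :=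
      intervalIntegral.integral_mono_on ht.1 (hinner.intervalIntegrable.mono_set hsub)
        (hsum.intervalIntegrable.mono_set hsub)
        fun s _ => by linarith [norm_sub_sq_real (e s) (e' s), sq_nonneg ‖e s - e' s‖]
    _ ≤ ∫ s in t0..tend, (‖e s‖ ^ 2 + ‖e' s‖ ^ 2) :=
      intervalIntegral.integral_mono_interval le_rfl ht.1 ht.2
        (.of_forall fun s => by positivity) hsum.intervalIntegrable
    _ = _ := intervalIntegral.integral_add
      (hpc.comp (φ := fun x => ‖x‖ ^ 2) (by fun_prop)).intervalIntegrable
      (he'.comp (φ := fun x => ‖x‖ ^ 2) (by fun_prop)).intervalIntegrable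

theorem SPMem.exists_polyVec {t0 tend : ℝ} {M : TimeMesh t0 tend} {d p : ℕ}
    {u u' u'' : ℝ → Euc d} (hu : SPMem d M p u u' u'') (i : Fin M.n) :
    ∃ P : Fin d → ℝ[X], (∀ ℓ, (P ℓ).natDegree ≤ p) ∧
      EqOn u' (polyVec P) (Ioo (M.a i) (M.b i)) ∧
      EqOn u'' (polyVec fun ℓ => derivative (P ℓ)) (Ioo (M.a i) (M.b i)) := by
  obtain ⟨c, hc⟩ := hu.poly i
  set S : Fin d → ℝ[X] := fun ℓ => ∑ k, C (c k ℓ) * X ^ (k : ℕ)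
  have hS : EqOn u (polyVec S) (Ioo (M.a i) (M.b i)) := fun t ht => by
    rw [hc t ht]
    ext ℓ
    simp only [polyVec, S, eval_finsetSum, eval_mul, eval_C, eval_pow, eval_X]
    simp [mul_comm]
  have hu' : EqOn u' (polyVec fun ℓ => derivative (S ℓ)) (Ioo (M.a i) (M.b i)) := fun t ht =>
    (hu.deriv1 i t ht).unique ((hasDerivAt_polyVec S t).congr_of_eventuallyEq
      (Filter.eventuallyEq_of_mem (Ioo_mem_nhds ht.1 ht.2) hS))
  refine ⟨fun ℓ => derivative (S ℓ), fun ℓ => ?_, hu', fun t ht =>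
    (hu.deriv2 i t ht).unique ((hasDerivAt_polyVec _ t).congr_of_eventuallyEq
      (Filter.eventuallyEq_of_mem (Ioo_mem_nhds ht.1 ht.2) hu'))⟩
  exact (natDegree_derivative_le _).trans <| tsub_le_self.trans <|
    natDegree_sum_le_of_forall_le _ _ fun k _ =>
      (natDegree_C_mul_X_pow_le _ _).trans (Nat.lt_succ_iff.1 k.2)

theorem SPMem.piecewiseContinuous {t0 tend : ℝ} {M : TimeMesh t0 tend} {d p : ℕ}
    {u u' u'' : ℝ → Euc d} (hu : SPMem d M p u u' u'') : M.PiecewiseContinuous u' := fun i => by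
  obtain ⟨P, -, hP, -⟩ := hu.exists_polyVec i
  exact ⟨polyVec P, (continuous_polyVec P).continuousOn, hP⟩

section Residual

variable {E : Type*} [NormedAddCommGroup E] [NormedSpace ℝ E]
  {Ft : ℝ → E → E} {Fy : ℝ → E → E →L[ℝ] E} {s : Set ℝ} {Λ₁ Λ₂ : ℝ}

def derivResidual (Ft : ℝ → E → E) (Fy : ℝ → E → E →L[ℝ] E) (w w' w'' : ℝ → E) (t : ℝ) : E :=
  Ft t (w t) + Fy t (w t) (w' t) - w'' t

structure JacobianBounds (Ft : ℝ → E → E) (Fy : ℝ → E → E →L[ℝ] E) (s : Set ℝ)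
    (Λ₁ Λ₂ : ℝ) : Prop where
  norm_Fy_le : ∀ t ∈ s, ∀ x, ‖Fy t x‖ ≤ Λ₁
  norm_Ft_sub_le : ∀ t₁ ∈ s, ∀ t₂ ∈ s, ∀ x y, ‖Ft t₁ x - Ft t₂ y‖ ≤ Λ₂ * (|t₁ - t₂| + ‖x - y‖)
  norm_Fy_sub_le : ∀ t₁ ∈ s, ∀ t₂ ∈ s, ∀ x y, ‖Fy t₁ x - Fy t₂ y‖ ≤ Λ₂ * (|t₁ - t₂| + ‖x - y‖)

namespace JacobianBounds

variable (hJ : JacobianBounds Ft Fy s Λ₁ Λ₂)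
include hJ

theorem mono {s' : Set ℝ} (hs : s' ⊆ s) : JacobianBounds Ft Fy s' Λ₁ Λ₂ :=
  ⟨fun t ht => hJ.1 t (hs ht), fun t₁ h₁ t₂ h₂ => hJ.2 t₁ (hs h₁) t₂ (hs h₂),
    fun t₁ h₁ t₂ h₂ => hJ.3 t₁ (hs h₁) t₂ (hs h₂)⟩

theorem continuousOn_derivResidual {w w' w'' : ℝ → E} (hw : ContinuousOn w s)
    (hw' : ContinuousOn w' s) (hw'' : ContinuousOn w'' s) :
    ContinuousOn (derivResidual Ft Fy w w' w'') s :=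
  ((hw.apply_of_norm_sub_le hJ.norm_Ft_sub_le).add
    ((hw.apply_of_norm_sub_le hJ.norm_Fy_sub_le).clm_apply hw')).sub hw''

theorem norm_derivResidual_sub_sq_le {u u' u'' v v' v'' : ℝ → E} {t δ : ℝ} (ht : t ∈ s)
    (hδ : ‖u t - v t‖ ^ 2 ≤ δ) :
    ‖derivResidual Ft Fy u u' u'' t - derivResidual Ft Fy v v' v'' t‖ ^ 2 ≤
      4 * (Λ₂ ^ 2 * ‖u t - v t‖ ^ 2 + Λ₁ ^ 2 * ‖u' t - v' t‖ ^ 2 +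
        Λ₂ ^ 2 * δ * ‖v' t‖ ^ 2 + ‖u'' t - v'' t‖ ^ 2) := by
  have hFt : ‖Ft t (u t) - Ft t (v t)‖ ≤ Λ₂ * ‖u t - v t‖ := by
    simpa using hJ.norm_Ft_sub_le t ht t ht (u t) (v t)
  have hFy : ‖(Fy t (u t) - Fy t (v t)) (v' t)‖ ≤ Λ₂ * ‖u t - v t‖ * ‖v' t‖ :=
    ((Fy t (u t) - Fy t (v t)).le_opNorm _).trans <| mul_le_mul_of_nonneg_right
      (by simpa using hJ.norm_Fy_sub_le t ht t ht (u t) (v t)) (norm_nonneg _)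
  have hFy' : ‖Fy t (u t) (u' t - v' t)‖ ≤ Λ₁ * ‖u' t - v' t‖ :=
    ((Fy t (u t)).le_opNorm _).trans
      (mul_le_mul_of_nonneg_right (hJ.norm_Fy_le t ht _) (norm_nonneg _))
  have hsplit : derivResidual Ft Fy u u' u'' t - derivResidual Ft Fy v v' v'' t =
      (Ft t (u t) - Ft t (v t)) + Fy t (u t) (u' t - v' t) +
        (Fy t (u t) - Fy t (v t)) (v' t) - (u'' t - v'' t) := by
    simp only [derivResidual, map_sub, sub_apply]
    abel
  have htri : ‖derivResidual Ft Fy u u' u'' t - derivResidual Ft Fy v v' v'' t‖ ≤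
      Λ₂ * ‖u t - v t‖ + Λ₁ * ‖u' t - v' t‖ + Λ₂ * ‖u t - v t‖ * ‖v' t‖ + ‖u'' t - v'' t‖ := by
    rw [hsplit]
    refine (norm_sub_le _ _).trans ?_
    gcongr
    exact norm_add₃_le.trans (by gcongr)
  calc _ ≤ (Λ₂ * ‖u t - v t‖ + Λ₁ * ‖u' t - v' t‖ + Λ₂ * ‖u t - v t‖ * ‖v' t‖ +
        ‖u'' t - v'' t‖) ^ 2 := pow_le_pow_left₀ (norm_nonneg _) htri 2
    _ ≤ 4 * (Λ₂ ^ 2 * ‖u t - v t‖ ^ 2 + Λ₁ ^ 2 * ‖u' t - v' t‖ ^ 2 +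
        Λ₂ ^ 2 * ‖u t - v t‖ ^ 2 * ‖v' t‖ ^ 2 + ‖u'' t - v'' t‖ ^ 2) := by
      have four_sq (a b c d : ℝ) : (a + b + c + d) ^ 2 ≤ 4 * (a ^ 2 + b ^ 2 + c ^ 2 + d ^ 2) := by
        nlinarith [sq_nonneg (a - b), sq_nonneg (a - c), sq_nonneg (a - d), sq_nonneg (b - c),
          sq_nonneg (b - d), sq_nonneg (c - d)]
      exact (four_sq _ _ _ _).trans_eq (by ring)
    _ ≤ _ := by gcongr

theorem integral_norm_derivResidual_sub_sq_le {a b δ : ℝ} (hab : a ≤ b) (hs : Icc a b ⊆ s)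
    {u u' u'' v v' v'' : ℝ → E} (hu : ContinuousOn u (Icc a b))
    (hu' : ContinuousOn u' (Icc a b)) (hu'' : ContinuousOn u'' (Icc a b))
    (hv : ContinuousOn v (Icc a b)) (hv' : ContinuousOn v' (Icc a b))
    (hv'' : ContinuousOn v'' (Icc a b)) (hδ : ∀ t ∈ Icc a b, ‖u t - v t‖ ^ 2 ≤ δ) :
    ∫ t in a..b, ‖derivResidual Ft Fy u u' u'' t - derivResidual Ft Fy v v' v'' t‖ ^ 2 ≤
      4 * (Λ₂ ^ 2 * (∫ t in a..b, ‖u t - v t‖ ^ 2) + Λ₁ ^ 2 * (∫ t in a..b, ‖u' t - v' t‖ ^ 2) +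
        Λ₂ ^ 2 * δ * (∫ t in a..b, ‖v' t‖ ^ 2) + ∫ t in a..b, ‖u'' t - v'' t‖ ^ 2) := by
  replace hJ := hJ.mono hs
  have sq_integrable {f : ℝ → E} (hf : ContinuousOn f (Icc a b)) :
      IntervalIntegrable (fun t => ‖f t‖ ^ 2) volume a b :=
    (hf.norm.pow 2).intervalIntegrable_of_Icc hab
  have h₁ := (sq_integrable (f := fun t => u t - v t) (hu.sub hv)).const_mul (Λ₂ ^ 2)
  have h₂ := (sq_integrable (f := fun t => u' t - v' t) (hu'.sub hv')).const_mul (Λ₁ ^ 2)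
  have h₃ := (sq_integrable hv').const_mul (Λ₂ ^ 2 * δ)
  have h₄ := sq_integrable (f := fun t => u'' t - v'' t) (hu''.sub hv'')
  refine (intervalIntegral.integral_mono_on hab
    (sq_integrable (f := fun t => derivResidual Ft Fy u u' u'' t - derivResidual Ft Fy v v' v'' t)
      ((hJ.continuousOn_derivResidual hu hu' hu'').sub (hJ.continuousOn_derivResidual hv hv' hv'')))
    ((((h₁.add h₂).add h₃).add h₄).const_mul 4)
    fun t ht => hJ.norm_derivResidual_sub_sq_le ht (hδ t ht)).trans_eq ?_
  rw [intervalIntegral.integral_const_mul, intervalIntegral.integral_add ((h₁.add h₂).add h₃) h₄,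
    intervalIntegral.integral_add (h₁.add h₂) h₃, intervalIntegral.integral_add h₁ h₂]
  simp only [intervalIntegral.integral_const_mul]

end JacobianBounds

end Residual

theorem etaSq_nonneg {d : ℕ} (Ft : ℝ → Euc d → Euc d) (Fy : ℝ → Euc d → (Euc d →L[ℝ] Euc d))
    (w w' w'' : ℝ → Euc d) {a b : ℝ} (hab : a ≤ b) : 0 ≤ etaSq d Ft Fy w w' w'' a b :=
  mul_nonneg (sq_nonneg _) (intervalIntegral.integral_nonneg hab fun _ _ => sq_nonneg _)

section Stability

variable {d p : ℕ} {Ft : ℝ → Euc d → Euc d} {Fy : ℝ → Euc d → (Euc d →L[ℝ] Euc d)}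
  {s : Set ℝ} {Λ₁ Λ₂ K : ℝ} {u u' u'' v v' v'' : ℝ → Euc d}

theorem etaSq_congr_Ioo {w w' w'' W' W'' : ℝ → Euc d} {a b : ℝ} (hab : a ≤ b)
    (h' : EqOn w' W' (Ioo a b)) (h'' : EqOn w'' W'' (Ioo a b)) :
    etaSq d Ft Fy w w' w'' a b = etaSq d Ft Fy w W' W'' a b :=
  congrArg _ (intervalIntegral.integral_congr_Ioo_of_le hab fun t ht => by
    simp only [h' ht, h'' ht])

theorem sq_sqrt_etaSq_sub_le_of_eqOn_polyVec (hJ : JacobianBounds Ft Fy s Λ₁ Λ₂)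
    (hK : HasInverseEstimate d p K) {a b T δ : ℝ} (hab : a < b) (hs : Icc a b ⊆ s)
    (hT : b - a ≤ T) {P Q : Fin d → ℝ[X]} (hP : ∀ ℓ, (P ℓ).natDegree ≤ p)
    (hQ : ∀ ℓ, (Q ℓ).natDegree ≤ p) (hu : ContinuousOn u (Icc a b))
    (hu' : EqOn u' (polyVec P) (Ioo a b))
    (hu'' : EqOn u'' (polyVec fun ℓ => derivative (P ℓ)) (Ioo a b))
    (hv : ContinuousOn v (Icc a b)) (hv' : EqOn v' (polyVec Q) (Ioo a b))
    (hv'' : EqOn v'' (polyVec fun ℓ => derivative (Q ℓ)) (Ioo a b))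
    (hδ : ∀ t ∈ Icc a b, ‖u t - v t‖ ^ 2 ≤ δ) :
    (√(etaSq d Ft Fy u u' u'' a b) - √(etaSq d Ft Fy v v' v'' a b)) ^ 2 ≤
      4 * T ^ 2 * Λ₂ ^ 2 * (∫ t in a..b, ‖u t - v t‖ ^ 2) +
        4 * (T ^ 2 * Λ₁ ^ 2 + K) * (∫ t in a..b, ‖u' t - v' t‖ ^ 2) +
        4 * T ^ 2 * Λ₂ ^ 2 * δ * ∫ t in a..b, ‖v' t‖ ^ 2 := by
  have hu₁ := (continuous_polyVec P).continuousOn (s := Icc a b)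
  have hu₂ := (continuous_polyVec fun ℓ => derivative (P ℓ)).continuousOn (s := Icc a b)
  have hv₁ := (continuous_polyVec Q).continuousOn (s := Icc a b)
  have hv₂ := (continuous_polyVec fun ℓ => derivative (Q ℓ)).continuousOn (s := Icc a b)
  have hres := hJ.integral_norm_derivResidual_sub_sq_le hab.le hs hu hu₁ hu₂ hv hv₁ hv₂ hδ
  have hinv : (b - a) ^ 2 * ∫ t in a..b, ‖polyVec (fun ℓ => derivative (P ℓ)) t -
      polyVec (fun ℓ => derivative (Q ℓ)) t‖ ^ 2 ≤
        K * ∫ t in a..b, ‖polyVec P t - polyVec Q t‖ ^ 2 := by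
    simpa only [derivative_sub, polyVec_sub] using hK a b hab (fun ℓ => P ℓ - Q ℓ)
      fun ℓ => (natDegree_sub_le _ _).trans (max_le (hP ℓ) (hQ ℓ))
  have hY : ∫ t in a..b, ‖u' t - v' t‖ ^ 2 = ∫ t in a..b, ‖polyVec P t - polyVec Q t‖ ^ 2 :=
    intervalIntegral.integral_congr_Ioo_of_le hab.le fun t ht => by simp only [hu' ht, hv' ht]
  have hZ : ∫ t in a..b, ‖v' t‖ ^ 2 = ∫ t in a..b, ‖polyVec Q t‖ ^ 2 :=
    intervalIntegral.integral_congr_Ioo_of_le hab.le fun t ht => by simp only [hv' ht]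
  rw [etaSq_congr_Ioo hab.le hu' hu'', etaSq_congr_Ioo hab.le hv' hv'', hY, hZ]
  set X := ∫ t in a..b, ‖u t - v t‖ ^ 2
  set Y := ∫ t in a..b, ‖polyVec P t - polyVec Q t‖ ^ 2
  set Z := ∫ t in a..b, ‖polyVec Q t‖ ^ 2
  have hX : 0 ≤ X := intervalIntegral.integral_nonneg hab.le fun _ _ => sq_nonneg _
  have hY : 0 ≤ Y := intervalIntegral.integral_nonneg hab.le fun _ _ => sq_nonneg _
  have hZ : 0 ≤ Z := intervalIntegral.integral_nonneg hab.le fun _ _ => sq_nonneg _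
  have hδ₀ : 0 ≤ δ := (sq_nonneg _).trans (hδ a (left_mem_Icc.2 hab.le))
  have hT₂ : (b - a) ^ 2 ≤ T ^ 2 := pow_le_pow_left₀ (sub_pos.2 hab).le hT 2
  have h₁ := mul_le_mul_of_nonneg_right hT₂ (mul_nonneg (sq_nonneg Λ₂) hX)
  have h₂ := mul_le_mul_of_nonneg_right hT₂ (mul_nonneg (sq_nonneg Λ₁) hY)
  have h₃ := mul_le_mul_of_nonneg_right hT₂ (mul_nonneg (mul_nonneg (sq_nonneg Λ₂) hδ₀) hZ)
  have hJ' := hJ.mono hs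
  calc _ ≤ (b - a) ^ 2 * ∫ t in a..b, ‖derivResidual Ft Fy u (polyVec P)
        (polyVec fun ℓ => derivative (P ℓ)) t - derivResidual Ft Fy v (polyVec Q)
        (polyVec fun ℓ => derivative (Q ℓ)) t‖ ^ 2 :=
      sq_sqrt_mul_integral_sub_le hab.le (hJ'.continuousOn_derivResidual hu hu₁ hu₂)
        (hJ'.continuousOn_derivResidual hv hv₁ hv₂) _
    _ ≤ _ := mul_le_mul_of_nonneg_left hres (sq_nonneg _)
    _ ≤ _ := by linarith

variable {t0 tend : ℝ} {Mc Mf : TimeMesh t0 tend}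

theorem sq_sqrt_etaSq_sub_le (hJ : JacobianBounds Ft Fy (Icc t0 tend) Λ₁ Λ₂)
    (hK : HasInverseEstimate d p K) (hu : SPMem d Mc p u u' u'') (hv : SPMem d Mf p v v' v'')
    {δ : ℝ} (hδ : ∀ t ∈ Icc t0 tend, ‖u t - v t‖ ^ 2 ≤ δ) {i : Fin Mc.n}
    (hi : Mc.Common Mf i) :
    (√(etaSq d Ft Fy u u' u'' (Mc.a i) (Mc.b i)) -
        √(etaSq d Ft Fy v v' v'' (Mc.a i) (Mc.b i))) ^ 2 ≤
      4 * (tend - t0) ^ 2 * Λ₂ ^ 2 * (∫ t in Mc.a i..Mc.b i, ‖u t - v t‖ ^ 2) +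
        4 * ((tend - t0) ^ 2 * Λ₁ ^ 2 + K) * (∫ t in Mc.a i..Mc.b i, ‖u' t - v' t‖ ^ 2) +
        4 * (tend - t0) ^ 2 * Λ₂ ^ 2 * δ * ∫ t in Mc.a i..Mc.b i, ‖v' t‖ ^ 2 := by
  obtain ⟨j, hja, hjb⟩ := hi
  obtain ⟨P, hP, hP', hP''⟩ := hu.exists_polyVec i
  obtain ⟨Q, hQ, hQ', hQ''⟩ := hv.exists_polyVec j
  rw [hja, hjb] at hQ' hQ''
  have hsub := Mc.Icc_subset i
  exact sq_sqrt_etaSq_sub_le_of_eqOn_polyVec hJ hK (Mc.a_lt_b i) hsub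
    (sub_le_sub (Mc.b_le_tend i) (Mc.t0_le_a i)) hP hQ (hu.cont.mono hsub) hP' hP''
    (hv.cont.mono hsub) hQ' hQ'' fun t ht => hδ t (hsub ht)

theorem SPMem.piecewiseContinuous_sub (hu : SPMem d Mc p u u' u'') (hRef : Mf.Refines Mc)
    (hv : SPMem d Mf p v v' v'') : Mf.PiecewiseContinuous fun t => u' t - v' t :=
  (hu.piecewiseContinuous.of_refines hRef).comp₂ (φ := fun x y => x - y) continuous_sub
    hv.piecewiseContinuous

theorem SPMem.norm_sub_sq_le_h1Sq (hu : SPMem d Mc p u u' u'') (hRef : Mf.Refines Mc)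
    (hv : SPMem d Mf p v v' v'') (h₀ : u t0 = v t0) {t : ℝ} (ht : t ∈ Icc t0 tend) :
    ‖u t - v t‖ ^ 2 ≤ h1Sq d t0 tend (fun t => u t - v t) (fun t => u' t - v' t) := by
  refine Mf.norm_sq_le_integral_add_integral (hu.cont.sub hv.cont) (sub_eq_zero.2 h₀)
    (fun j s hs => ?_) (hu.piecewiseContinuous_sub hRef hv) ht
  obtain ⟨i, -, hIoo⟩ := hRef.exists_Ioo_subset j
  exact (hu.deriv1 i s (hIoo hs)).sub (hv.deriv1 j s hs)

theorem abs_sqrt_sum_etaSq_sub_le (hRef : Mf.Refines Mc)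
    (hJ : JacobianBounds Ft Fy (Icc t0 tend) Λ₁ Λ₂)
    (hK : HasInverseEstimate d p K) (hK₀ : 0 ≤ K)
    (hu : SPMem d Mc p u u' u'') (hv : SPMem d Mf p v v' v'') (h₀ : u t0 = v t0) {B : ℝ}
    (hB : ∫ t in t0..tend, ‖v' t‖ ^ 2 ≤ B) :
    |√(∑ i ∈ Finset.univ.filter (fun i : Fin Mc.n => Mc.Common Mf i),
        etaSq d Ft Fy u u' u'' (Mc.a i) (Mc.b i)) -
      √(∑ i ∈ Finset.univ.filter (fun i : Fin Mc.n => Mc.Common Mf i),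
        etaSq d Ft Fy v v' v'' (Mc.a i) (Mc.b i))| ≤
      √(4 * ((tend - t0) ^ 2 * (Λ₂ ^ 2 + Λ₁ ^ 2 + Λ₂ ^ 2 * B) + K)) *
        √(h1Sq d t0 tend (fun t => u t - v t) (fun t => u' t - v' t)) := by
  set H := h1Sq d t0 tend (fun t => u t - v t) (fun t => u' t - v' t)
  set S := Finset.univ.filter (fun i : Fin Mc.n => Mc.Common Mf i)
  have hX := Mc.sum_integral_le (φ := fun t => ‖u t - v t‖ ^ 2) (fun _ _ => sq_nonneg _)
    (((hu.cont.sub hv.cont).norm.pow 2).intervalIntegrable_of_Icc Mc.t0_le_tend) S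
  have hY := Mc.sum_integral_le (φ := fun t => ‖u' t - v' t‖ ^ 2) (fun _ _ => sq_nonneg _)
    ((hu.piecewiseContinuous_sub hRef hv).comp (φ := fun x => ‖x‖ ^ 2)
      (by fun_prop)).intervalIntegrable S
  have hZ := Mc.sum_integral_le (φ := fun t => ‖v' t‖ ^ 2) (fun _ _ => sq_nonneg _)
    (hv.piecewiseContinuous.comp (φ := fun x => ‖x‖ ^ 2) (by fun_prop)).intervalIntegrable S
  have hX₀ : 0 ≤ ∫ t in t0..tend, ‖u t - v t‖ ^ 2 :=
    intervalIntegral.integral_nonneg Mc.t0_le_tend fun _ _ => sq_nonneg _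
  have hY₀ : 0 ≤ ∫ t in t0..tend, ‖u' t - v' t‖ ^ 2 :=
    intervalIntegral.integral_nonneg Mc.t0_le_tend fun _ _ => sq_nonneg _
  have hH : H = (∫ t in t0..tend, ‖u t - v t‖ ^ 2) + ∫ t in t0..tend, ‖u' t - v' t‖ ^ 2 := rfl
  have hH₀ : 0 ≤ H := hH ▸ add_nonneg hX₀ hY₀
  calc _ ≤ √(∑ i ∈ S, (√(etaSq d Ft Fy u u' u'' (Mc.a i) (Mc.b i)) -
        √(etaSq d Ft Fy v v' v'' (Mc.a i) (Mc.b i))) ^ 2) :=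
      abs_sqrt_sum_sub_sqrt_sum_le S (fun i _ => etaSq_nonneg _ _ _ _ _ (Mc.a_lt_b i).le)
        (fun i _ => etaSq_nonneg _ _ _ _ _ (Mc.a_lt_b i).le)
    _ ≤ √(∑ i ∈ S, (4 * (tend - t0) ^ 2 * Λ₂ ^ 2 * (∫ t in Mc.a i..Mc.b i, ‖u t - v t‖ ^ 2) +
        4 * ((tend - t0) ^ 2 * Λ₁ ^ 2 + K) * (∫ t in Mc.a i..Mc.b i, ‖u' t - v' t‖ ^ 2) +
        4 * (tend - t0) ^ 2 * Λ₂ ^ 2 * H * ∫ t in Mc.a i..Mc.b i, ‖v' t‖ ^ 2)) :=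
      Real.sqrt_le_sqrt <| Finset.sum_le_sum fun i hi =>
        sq_sqrt_etaSq_sub_le hJ hK hu hv (fun t ht => hu.norm_sub_sq_le_h1Sq hRef hv h₀ ht)
          (Finset.mem_filter.1 hi).2
    _ ≤ √(4 * ((tend - t0) ^ 2 * (Λ₂ ^ 2 + Λ₁ ^ 2 + Λ₂ ^ 2 * B) + K) * H) := by
      refine Real.sqrt_le_sqrt ?_
      rw [Finset.sum_add_distrib, Finset.sum_add_distrib, ← Finset.mul_sum, ← Finset.mul_sum,
        ← Finset.mul_sum]
      have h₁ := mul_le_mul_of_nonneg_left (hX.trans (le_add_of_nonneg_right hY₀))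
        (by positivity : 0 ≤ 4 * (tend - t0) ^ 2 * Λ₂ ^ 2)
      have h₂ := mul_le_mul_of_nonneg_left (hY.trans (le_add_of_nonneg_left hX₀))
        (by positivity : 0 ≤ 4 * ((tend - t0) ^ 2 * Λ₁ ^ 2 + K))
      have h₃ := mul_le_mul_of_nonneg_left (hZ.trans hB)
        (mul_nonneg (by positivity) hH₀ : 0 ≤ 4 * (tend - t0) ^ 2 * Λ₂ ^ 2 * H)
      rw [hH] at h₃ ⊢
      linear_combination h₁ + h₂ + h₃
    _ = _ := Real.sqrt_mul' _ hH₀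

end Stability

theorem stmt_10_general
    (L1 L2 : ℝ) (p : ℕ) (Mbd Tlen : ℝ) :
    ∃ Cstab : ℝ, 0 < Cstab ∧
      ∀ (t0 tend : ℝ), tend - t0 = Tlen →
      ∀ (d : ℕ), 1 ≤ d →
      ∀ (F Ft : ℝ → Euc d → Euc d) (Fy : ℝ → Euc d → (Euc d →L[ℝ] Euc d)),
        -- `F` is Lipschitz in the second argument:
        (∀ t ∈ Icc t0 tend, ∀ a b : Euc d, ‖F t a - F t b‖ ≤ L1 * ‖a - b‖) →
        -- `Ft`, `Fy` are the partial derivatives of `F`: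
        (∀ t ∈ Icc t0 tend, ∀ a : Euc d, HasDerivAt (fun s => F s a) (Ft t a) t) →
        (∀ t ∈ Icc t0 tend, ∀ a : Euc d, HasFDerivAt (F t) (Fy t a) a) →
        -- the total Jacobian is Lipschitz with constant `L₂`:
        (∀ t1 ∈ Icc t0 tend, ∀ t2 ∈ Icc t0 tend, ∀ a b : Euc d,
          ‖Ft t1 a - Ft t2 b‖ ≤ L2 * (|t1 - t2| + ‖a - b‖) ∧
          ‖Fy t1 a - Fy t2 b‖ ≤ L2 * (|t1 - t2| + ‖a - b‖)) →
      ∀ (Mc Mf : TimeMesh t0 tend), Mf.Refines Mc →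
      ∀ (u u' u'' uh uh' uh'' : ℝ → Euc d),
        SPMem d Mc p u u' u'' → SPMem d Mf p uh uh' uh'' →
        u t0 = uh t0 →
        Real.sqrt (h1Sq d t0 tend u u') ≤ Mbd →
        Real.sqrt (h1Sq d t0 tend uh uh') ≤ Mbd →
        (∀ i : Fin Mc.n, ∀ t ∈ Icc (Mc.a i) (Mc.b i), Mc.len i * ‖u' t‖ ≤ Mbd) →
        |Real.sqrt (∑ i ∈ Finset.univ.filter (fun i : Fin Mc.n => Mc.Common Mf i),
            etaSq d Ft Fy u u' u'' (Mc.a i) (Mc.b i)) -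
          Real.sqrt (∑ i ∈ Finset.univ.filter (fun i : Fin Mc.n => Mc.Common Mf i),
            etaSq d Ft Fy uh uh' uh'' (Mc.a i) (Mc.b i))| ≤
          Cstab * Real.sqrt (h1Sq d t0 tend
            (fun t => u t - uh t) (fun t => u' t - uh' t)) := by
  obtain ⟨K, hK₀, hK⟩ := exists_hasInverseEstimate p
  refine ⟨√(4 * (Tlen ^ 2 * (L2 ^ 2 + |L1| ^ 2 + L2 ^ 2 * Mbd ^ 2) + K)) + 1, by positivity, ?_⟩
  intro t0 tend hT d _ F Ft Fy hLip _ hFy hJac Mc Mf hRef u u' u'' uh uh' uh'' hu huh h₀ _ hMuh _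
  have hJ : JacobianBounds Ft Fy (Icc t0 tend) |L1| L2 :=
    ⟨fun t ht x => (hFy t ht x).le_of_lip' (abs_nonneg L1) (.of_forall fun y =>
      (hLip t ht y x).trans (by gcongr; exact le_abs_self L1)),
     fun t₁ h₁ t₂ h₂ x y => (hJac t₁ h₁ t₂ h₂ x y).1,
     fun t₁ h₁ t₂ h₂ x y => (hJac t₁ h₁ t₂ h₂ x y).2⟩
  have hB : ∫ t in t0..tend, ‖uh' t‖ ^ 2 ≤ Mbd ^ 2 :=
    (le_add_of_nonneg_left (intervalIntegral.integral_nonneg Mc.t0_le_tend fun _ _ =>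
      sq_nonneg _)).trans (Real.sqrt_le_iff.1 hMuh).2
  have key := abs_sqrt_sum_etaSq_sub_le hRef hJ (hK d) hK₀ hu huh h₀ hB
  rw [hT] at key
  exact key.trans (by gcongr; linarith)

/-- stability of the estimator on non-refined elements, axiom (A1).
There is `C_stab > 0`, depending only on `L₁`, `L₂`, `p`, the bound `Mbd` and the
interval length `t_end − t₀ = Tlen`, such that for every mesh `𝒯`, every refinement
`𝒯̂`, and all `u ∈ S^p(𝒯)`, `û ∈ S^p(𝒯̂)` with the same initial value and the stated
uniform bounds, the difference of the estimators over the common intervals `𝒯 ∩ 𝒯̂` is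
bounded by `C_stab ‖u − û‖_{H¹}`. -/
theorem stmt_10
    (L1 L2 : ℝ) (p : ℕ) (hp : 1 ≤ p) (Mbd Tlen : ℝ) (hMbd : 0 < Mbd)
    (hTlen : 0 < Tlen) :
    ∃ Cstab : ℝ, 0 < Cstab ∧
      ∀ (t0 tend : ℝ), tend - t0 = Tlen →
      ∀ (d : ℕ), 1 ≤ d →
      ∀ (F Ft : ℝ → Euc d → Euc d) (Fy : ℝ → Euc d → (Euc d →L[ℝ] Euc d)),
        -- `F` is Lipschitz in the second argument:
        (∀ t ∈ Icc t0 tend, ∀ a b : Euc d, ‖F t a - F t b‖ ≤ L1 * ‖a - b‖) →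
        -- `Ft`, `Fy` are the partial derivatives of `F`:
        (∀ t ∈ Icc t0 tend, ∀ a : Euc d, HasDerivAt (fun s => F s a) (Ft t a) t) →
        (∀ t ∈ Icc t0 tend, ∀ a : Euc d, HasFDerivAt (F t) (Fy t a) a) →
        -- the total Jacobian is Lipschitz with constant `L₂`:
        (∀ t1 ∈ Icc t0 tend, ∀ t2 ∈ Icc t0 tend, ∀ a b : Euc d,
          ‖Ft t1 a - Ft t2 b‖ ≤ L2 * (|t1 - t2| + ‖a - b‖) ∧
          ‖Fy t1 a - Fy t2 b‖ ≤ L2 * (|t1 - t2| + ‖a - b‖)) →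
      ∀ (Mc Mf : TimeMesh t0 tend), Mf.Refines Mc →
      ∀ (u u' u'' uh uh' uh'' : ℝ → Euc d),
        SPMem d Mc p u u' u'' → SPMem d Mf p uh uh' uh'' →
        u t0 = uh t0 →
        Real.sqrt (h1Sq d t0 tend u u') ≤ Mbd →
        Real.sqrt (h1Sq d t0 tend uh uh') ≤ Mbd →
        (∀ i : Fin Mc.n, ∀ t ∈ Icc (Mc.a i) (Mc.b i), Mc.len i * ‖u' t‖ ≤ Mbd) →
        |Real.sqrt (∑ i ∈ Finset.univ.filter (fun i : Fin Mc.n => Mc.Common Mf i),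
            etaSq d Ft Fy u u' u'' (Mc.a i) (Mc.b i)) -
          Real.sqrt (∑ i ∈ Finset.univ.filter (fun i : Fin Mc.n => Mc.Common Mf i),
            etaSq d Ft Fy uh uh' uh'' (Mc.a i) (Mc.b i))| ≤
          Cstab * Real.sqrt (h1Sq d t0 tend
            (fun t => u t - uh t) (fun t => u' t - uh' t)) :=
  stmt_10_general L1 L2 p Mbd Tlen
end
end
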